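/- arXiv:1911.08176 — 14 statements merged into one kernel-verified Lean document; each statement's English description precedes it below -/
import Mathlib

section
/- Let p be an odd prime. Then the sum of all primitive roots modulo p is congruent to μ(p-1) modulo p; that is, the sum over all units g of ℤ/pℤ whose multiplicative order equals p-1 equals μ(p-1) in ℤ/pℤ, where μ is the Möbius function. -/
open Finset in
open scoped Classical in
/-- Gauss: for an odd prime `p`, the sum of all primitive roots modulo `p`
(units of `ZMod p` of multiplicative order `p - 1`) is `μ (p - 1)` in `ZMod p`. -/
theorem sum_primitiveRoots_eq_moebius (p : ℕ) [Fact p.Prime] (hp : p ≠ 2) :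
    ∑ g ∈ univ.filter (fun g : (ZMod p)ˣ => orderOf g = p - 1), (g : ZMod p) =
      ((ArithmeticFunction.moebius (p - 1) : ℤ) : ZMod p) := by
  classical
  have hprime := (Fact.out : p.Prime)
  set n := p - 1 with hn
  have hcard : Fintype.card (ZMod p)ˣ = n := by
    rw [ZMod.card_units_eq_totient p, Nat.totient_prime hprime]
  have hn0 : 0 < n := by
    have := hprime.two_le
    omega
  -- the "order ≤ d" sums
  set T : ℕ → ZMod p := fun d => ∑ g ∈ univ.filter (fun g : (ZMod p)ˣ => g ^ d = 1), (g : ZMod p)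
    with hT
  set f : ℕ → ZMod p := fun d => ∑ g ∈ univ.filter (fun g : (ZMod p)ˣ => orderOf g = d),
    (g : ZMod p) with hf
  -- T d = 0 for 1 < d ∣ n, T 1 = 1
  have hT1 : T 1 = 1 := by
    simp [hT, Finset.filter_eq']
  have hTd : ∀ d, d ∣ n → 1 < d → T d = 0 := by
    intro d hdvd hd1
    -- get an element of order d
    obtain ⟨h, hh⟩ : ∃ h : (ZMod p)ˣ, orderOf h = d := by
      obtain ⟨ζ, hζ⟩ := IsCyclic.exists_generator (α := (ZMod p)ˣ)
      refine ⟨ζ ^ (n / d), ?_⟩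
      have hζord : orderOf ζ = n := by
        rw [orderOf_eq_card_of_forall_mem_zpowers hζ, Nat.card_eq_fintype_card, hcard]
      rw [orderOf_pow, hζord, Nat.gcd_eq_right (Nat.div_dvd_of_dvd hdvd),
        Nat.div_div_self hdvd hn0.ne']
    -- multiplication by h permutes the set
    have key : (h : ZMod p) * T d = T d := by
      rw [hT, Finset.mul_sum]
      refine Finset.sum_nbij' (fun g => h * g) (fun g => h⁻¹ * g) ?_ ?_ ?_ ?_ ?_
      · intro g hg
        simp only [mem_filter, mem_univ, true_and] at hg ⊢
        rw [mul_pow, hg, ← hh, pow_orderOf_eq_one, one_mul]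
      · intro g hg
        simp only [mem_filter, mem_univ, true_and] at hg ⊢
        rw [mul_pow, hg, inv_pow, ← hh, pow_orderOf_eq_one, inv_one, one_mul]
      · intro g _; simp [mul_assoc]
      · intro g _; simp [mul_assoc]
      · intro g _; push_cast; ring
    have hne : (h : ZMod p) ≠ 1 := by
      intro hEq
      have : h = 1 := Units.ext hEq
      rw [this, orderOf_one] at hh
      omega
    have h2 := sub_eq_zero.mpr key
    rw [← sub_one_mul] at h2
    rcases mul_eq_zero.mp h2 with h0 | h0
    · exact absurd (sub_eq_zero.mp h0) hne
    · exact h0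
  -- partition T d by order
  have hTf : ∀ d > 0, d ∈ {m | m ∣ n} → ∑ e ∈ d.divisors, f e = T d := by
    intro d hd0 hdvd
    show ∑ e ∈ d.divisors, f e =
      ∑ g ∈ univ.filter (fun g : (ZMod p)ˣ => g ^ d = 1), (g : ZMod p)
    have : (univ.filter (fun g : (ZMod p)ˣ => g ^ d = 1)) =
        univ.filter (fun g : (ZMod p)ˣ => orderOf g ∣ d) := by
      ext g; simp [orderOf_dvd_iff_pow_eq_one]
    have hmaps : ∀ g ∈ univ.filter (fun g : (ZMod p)ˣ => orderOf g ∣ d), orderOf g ∈ d.divisors := by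
      intro g hg
      simp only [mem_filter, mem_univ, true_and] at hg
      exact Nat.mem_divisors.mpr ⟨hg, hd0.ne'⟩
    have hfib := Finset.sum_fiberwise_of_maps_to (f := fun g : (ZMod p)ˣ => (g : ZMod p)) hmaps
    rw [this, ← hfib]
    refine Finset.sum_congr rfl fun e he => ?_
    have hset : (univ.filter (fun g : (ZMod p)ˣ => orderOf g ∣ d)).filter
        (fun g => orderOf g = e) = univ.filter (fun g : (ZMod p)ˣ => orderOf g = e) := by
      rw [Finset.filter_filter]
      apply Finset.filter_congr
      intro g _
      simp only [and_iff_right_iff_imp]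
      intro hg
      rw [hg]
      exact Nat.dvd_of_mem_divisors he
    rw [hf, hset]
  -- Möbius inversion
  have hs : ∀ m k : ℕ, m ∣ k → k ∈ {m | m ∣ n} → m ∈ {m | m ∣ n} :=
    fun m k hmk hk => hmk.trans hk
  have hinv := (ArithmeticFunction.sum_eq_iff_sum_smul_moebius_eq_on
    (f := f) (g := T) {m | m ∣ n} hs).mp hTf n hn0 dvd_rfl
  have hinv' : ∑ x ∈ n.divisorsAntidiagonal, ArithmeticFunction.moebius x.1 • T x.2 =
      ∑ g ∈ univ.filter (fun g : (ZMod p)ˣ => orderOf g = n), (g : ZMod p) := hinv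
  rw [← hinv']
  rw [Nat.sum_divisorsAntidiagonal' (f := fun x y => (ArithmeticFunction.moebius x : ℤ) • T y)]
  have : ∀ d ∈ n.divisors, (ArithmeticFunction.moebius (n / d) : ℤ) • T d
      = if d = 1 then ((ArithmeticFunction.moebius n : ℤ) : ZMod p) else 0 := by
    intro d hd
    obtain ⟨hdvd, -⟩ := Nat.mem_divisors.mp hd
    by_cases h1 : d = 1
    · subst h1
      simp [hT1, zsmul_eq_mul]
    · have : 1 < d := by
        have := Nat.pos_of_mem_divisors hd; omega
      rw [hTd d hdvd this, smul_zero, if_neg h1]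
  rw [Finset.sum_congr rfl this, Finset.sum_ite_eq' n.divisors 1,
    if_pos (Nat.one_mem_divisors.mpr hn0.ne')]
end

section
/- Let p be a prime greater than 3 and α a positive integer. Then the product over all units g of ℤ/p^αℤ whose multiplicative order equals φ(p^α) is congruent to 1 modulo p^α. -/
open Finset in
open scoped Classical in
/-- Cai: for a prime `p > 3` and `α ≥ 1`, the product of all primitive roots modulo `p^α`
(units of `ZMod (p^α)` of multiplicative order `φ(p^α)`) is `1`. -/
theorem prod_primitiveRoots_prime_pow_eq_one (p α : ℕ) (hp : p.Prime) (hp3 : 3 < p)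
    (hα : 0 < α) :
    haveI : NeZero (p ^ α) := ⟨pow_ne_zero α hp.pos.ne'⟩
    ∏ g ∈ univ.filter (fun g : (ZMod (p ^ α))ˣ => orderOf g = Nat.totient (p ^ α)),
      (g : ZMod (p ^ α)) = 1 := by
  haveI : NeZero (p ^ α) := ⟨pow_ne_zero α hp.pos.ne'⟩
  have htot : 2 < Nat.totient (p ^ α) := by
    rw [Nat.totient_prime_pow hp hα]
    have h1 : 1 ≤ p ^ (α - 1) := Nat.one_le_pow _ _ hp.pos
    calc 2 < 1 * (p - 1) := by omega
    _ ≤ p ^ (α - 1) * (p - 1) := by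
        exact Nat.mul_le_mul_right _ h1
  refine Finset.prod_involution (fun a _ => a⁻¹) ?_ ?_ ?_ ?_
  · intro a ha
    rw [← Units.val_mul, mul_inv_cancel, Units.val_one]
  · intro a ha _ h
    have h' : a⁻¹ = a := h
    have h2 : a * a = 1 := by
      nth_rewrite 2 [← h']; exact mul_inv_cancel a
    have : orderOf a ∣ 2 := orderOf_dvd_of_pow_eq_one (by rw [pow_two]; exact h2)
    have hle : orderOf a ≤ 2 := Nat.le_of_dvd (by norm_num) this
    simp only [Finset.mem_filter] at ha
    omega
  · intro a ha
    simp only [Finset.mem_filter, Finset.mem_univ, true_and] at ha ⊢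
    rw [orderOf_inv]; exact ha
  · intro a ha
    simp
end

section
/- Let p be an odd prime and α a positive integer. Then the sum over all units g of ℤ/p^αℤ whose multiplicative order equals φ(p^α) is congruent to μ(p-1)·φ(p^{α-1}) modulo p^α, where μ is the Möbius function and φ is Euler's totient function. -/
/-!
The group `(ZMod (p ^ α))ˣ` is cyclic of order `n = p ^ (α - 1) * (p - 1)`, so Möbius inversion over
the orders of its elements writes the sum of its generators as `∑_{d ∣ n} μ (n / d) • S d`, where
`S d` is the sum of the `d`-th roots of unity. If `d` is not a power of `p`, some root of unity `ζ`
of order `d` is not `≡ 1 (mod p)` (the kernel of reduction mod `p` is a `p`-group), so `ζ - 1` is a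
unit and `ζ * S d = S d` forces `S d = 0`. If `d = p ^ k`, the `d`-th roots of unity are exactly the
residues `≡ 1 (mod p ^ (α - k))`; that set is stable under `x ↦ 2 - x`, so `2 * S d = 2 * d` and
`S d = d` since `p` is odd. What remains is
`μ (p - 1) * ∑_{d ∣ p ^ (α - 1)} μ (p ^ (α - 1) / d) * d = μ (p - 1) * φ (p ^ (α - 1))`.
-/

open Finset ArithmeticFunction
open scoped ArithmeticFunction.Moebius

section OrderMoebius
variable {G M : Type*} [Monoid G] [Fintype G] [DecidableEq G] [AddCommGroup M]

theorem sum_divisors_sum_orderOf_eq (f : G → M) {n : ℕ} (hn : n ≠ 0) :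
    ∑ d ∈ n.divisors, ∑ g with orderOf g = d, f g = ∑ g with g ^ n = 1, f g := by
  rw [← sum_fiberwise_of_maps_to (g := orderOf) fun g hg =>
    Nat.mem_divisors.2 ⟨orderOf_dvd_of_pow_eq_one (mem_filter.1 hg).2, hn⟩]
  refine sum_congr rfl fun d hd => ?_
  rw [filter_filter]
  refine sum_congr (filter_congr fun g _ => ?_) fun _ _ => rfl
  exact ⟨fun h => ⟨orderOf_dvd_iff_pow_eq_one.1 (h ▸ Nat.dvd_of_mem_divisors hd), h⟩, And.right⟩

theorem sum_orderOf_eq_sum_moebius_smul (f : G → M) {n : ℕ} (hn : 0 < n) :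
    ∑ g with orderOf g = n, f g = ∑ d ∈ n.divisors, μ (n / d) • ∑ g with g ^ d = 1, f g := by
  rw [← Nat.sum_divisorsAntidiagonal' fun a b => μ a • ∑ g with g ^ b = 1, f g]
  exact (sum_eq_iff_sum_smul_moebius_eq.1
    (fun m hm => sum_divisors_sum_orderOf_eq f hm.ne') n hn).symm

end OrderMoebius

theorem Nat.totient_eq_sum_divisors_moebius_mul (m : ℕ) :
    (m.totient : ℤ) = ∑ d ∈ m.divisors, μ (m / d) * d := by
  rcases m.eq_zero_or_pos with rfl | hm
  · simp
  rw [← Nat.sum_divisorsAntidiagonal' fun a b => (μ a : ℤ) * b]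
  have := (sum_eq_iff_sum_mul_moebius_eq (f := fun k => (k.totient : ℤ)) (g := fun k => (k : ℤ))).1
    (fun k _ => by exact_mod_cast Nat.sum_totient k) m hm
  simpa only [Int.cast_id] using this.symm

theorem sum_divisors_moebius_mul_div_mul {m c : ℕ} (hmc : m.Coprime c) :
    ∑ d ∈ m.divisors, μ (m * c / d) * (d : ℤ) = μ c * m.totient := by
  rw [Nat.totient_eq_sum_divisors_moebius_mul, mul_sum]
  refine sum_congr rfl fun d hd => ?_
  have hdm := Nat.dvd_of_mem_divisors hd
  rw [← Nat.div_mul_right_comm hdm, isMultiplicative_moebius.map_mul_of_coprime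
    (hmc.coprime_div_left hdm)]
  ring

theorem IsCyclic.mem_iff_pow_card_eq_one {G : Type*} [CommGroup G] [IsCyclic G] [Finite G]
    (H : Subgroup G) {g : G} : g ∈ H ↔ g ^ Nat.card H = 1 := by
  have hH : H = (powMonoidHom (Nat.card H) : G →* G).ker := by
    refine Subgroup.eq_of_le_of_card_ge (fun g hg => ?_) ?_
    · exact orderOf_dvd_iff_pow_eq_one.1 (Subgroup.orderOf_dvd_natCard H hg)
    · rw [IsCyclic.card_powMonoidHom_ker, Nat.gcd_eq_right (Subgroup.card_subgroup_dvd_card H)]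
  exact SetLike.ext_iff.1 hH g

section Units
variable {R : Type*} [CommRing R] [Fintype Rˣ] [DecidableEq Rˣ]

theorem Units.mul_sum_pow_eq_one {ζ : Rˣ} {d : ℕ} (hζ : ζ ^ d = 1) :
    (ζ : R) * ∑ g : Rˣ with g ^ d = 1, (g : R) = ∑ g : Rˣ with g ^ d = 1, (g : R) := by
  rw [mul_sum, sum_filter, sum_filter]
  refine Fintype.sum_equiv (Equiv.mulLeft ζ) _ _ fun g => ?_
  simp only [Equiv.coe_mulLeft, mul_pow, hζ, one_mul, Units.val_mul]

theorem Units.sum_pow_eq_one_eq_zero {ζ : Rˣ} {d : ℕ} (hζ : ζ ^ d = 1)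
    (hζ₁ : IsUnit ((ζ : R) - 1)) : ∑ g : Rˣ with g ^ d = 1, (g : R) = 0 :=
  hζ₁.mul_right_eq_zero.1 <| by rw [sub_mul, one_mul, Units.mul_sum_pow_eq_one hζ, sub_self]

end Units

theorem Finset.sum_eq_card_of_two_sub_mem {R : Type*} [Ring R] (h2 : IsUnit (2 : R))
    {s : Finset R} (hs : ∀ x ∈ s, 2 - x ∈ s) : ∑ x ∈ s, x = #s := by
  have hrefl : ∑ x ∈ s, x = ∑ x ∈ s, (2 - x) :=
    sum_nbij' (2 - ·) (2 - ·) hs hs (by simp) (by simp) (by simp)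
  have : 2 * ∑ x ∈ s, x = 2 * #s := by
    rw [two_mul]; nth_rewrite 2 [hrefl]
    rw [sum_sub_distrib, sum_const, nsmul_eq_mul, add_sub_cancel, Nat.cast_comm]
  exact h2.mul_left_cancel this

namespace ZMod
variable {p : ℕ}

theorem isUnit_of_isUnit_castHom_prime_pow (hp : p.Prime) {a b : ℕ} (ha : 0 < a) (hab : a ≤ b)
    {x : ZMod (p ^ b)} (hx : IsUnit (castHom (pow_dvd_pow p hab) (ZMod (p ^ a)) x)) :
    IsUnit x := by
  have : NeZero (p ^ b) := ⟨pow_ne_zero b hp.ne_zero⟩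
  rw [← natCast_zmod_val x, map_natCast, isUnit_natCast_iff_not_dvd_pow hp ha] at hx
  rwa [← natCast_zmod_val x, isUnit_natCast_iff_not_dvd_pow hp (ha.trans_le hab)]

theorem unitsMap_eq_one_iff {m n : ℕ} (h : n ∣ m) (u : (ZMod m)ˣ) :
    unitsMap h u = 1 ↔ castHom h (ZMod n) u = 1 := by
  rw [← Units.val_eq_one, unitsMap_val, castHom_apply]

theorem card_ker_unitsMap_prime_pow (hp : p.Prime) {a b : ℕ} (ha : 0 < a) (hab : a ≤ b) :
    Nat.card (unitsMap (pow_dvd_pow p hab)).ker = p ^ (b - a) := by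
  have : NeZero (p ^ a) := ⟨pow_ne_zero a hp.ne_zero⟩
  have : NeZero (p ^ b) := ⟨pow_ne_zero b hp.ne_zero⟩
  have hcard := (unitsMap (pow_dvd_pow p hab)).ker.card_mul_index
  rw [Subgroup.index_ker, MonoidHom.range_eq_top_of_surjective _ (unitsMap_surjective _),
    Subgroup.card_top, Nat.card_eq_fintype_card (α := (ZMod (p ^ a))ˣ),
    Nat.card_eq_fintype_card (α := (ZMod (p ^ b))ˣ), card_units_eq_totient, card_units_eq_totient,
    Nat.totient_prime_pow hp ha, Nat.totient_prime_pow hp (ha.trans_le hab)] at hcard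
  refine Nat.eq_of_mul_eq_mul_right (Nat.totient_pos.2 (pow_pos hp.pos a)) ?_
  rw [Nat.totient_prime_pow hp ha, hcard, ← mul_assoc, ← pow_add]
  congr 2
  omega

theorem pow_prime_pow_eq_one_iff (hp : p.Prime) (hodd : p ≠ 2) {α k : ℕ} (hk : k < α)
    (g : (ZMod (p ^ α))ˣ) :
    g ^ p ^ k = 1 ↔ unitsMap (pow_dvd_pow p (Nat.sub_le α k)) g = 1 := by
  have : NeZero (p ^ α) := ⟨pow_ne_zero α hp.ne_zero⟩
  have := isCyclic_units_of_prime_pow p hp hodd α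
  rw [← MonoidHom.mem_ker, IsCyclic.mem_iff_pow_card_eq_one,
    card_ker_unitsMap_prime_pow hp (Nat.sub_pos_of_lt hk) (Nat.sub_le α k), Nat.sub_sub_self hk.le]

theorem sum_units_pow_prime_pow_eq_one (hp : p.Prime) (hodd : p ≠ 2) {α k : ℕ} [NeZero (p ^ α)]
    (hk : k < α) :
    ∑ g : (ZMod (p ^ α))ˣ with g ^ p ^ k = 1, (g : ZMod (p ^ α)) = (p ^ k : ℕ) := by
  set f := castHom (pow_dvd_pow p (Nat.sub_le α k)) (ZMod (p ^ (α - k)))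
  have hmem (g : (ZMod (p ^ α))ˣ) : g ^ p ^ k = 1 ↔ f g = 1 :=
    (pow_prime_pow_eq_one_iff hp hodd hk g).trans (unitsMap_eq_one_iff _ g)
  have hcard : #({g | g ^ p ^ k = 1} : Finset (ZMod (p ^ α))ˣ) = p ^ k := by
    rw [filter_congr fun g _ =>
        (pow_prime_pow_eq_one_iff hp hodd hk g).trans MonoidHom.mem_ker.symm,
      ← Fintype.card_subtype, ← Nat.card_eq_fintype_card,
      card_ker_unitsMap_prime_pow hp (Nat.sub_pos_of_lt hk) (Nat.sub_le α k),
      Nat.sub_sub_self hk.le]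
  have h2 : IsUnit (2 : ZMod (p ^ α)) := by
    exact_mod_cast (isUnit_natCast_iff_not_dvd_pow hp (by omega)).2
      fun h => hodd ((Nat.prime_dvd_prime_iff_eq hp Nat.prime_two).1 h)
  let e : (ZMod (p ^ α))ˣ ↪ ZMod (p ^ α) := ⟨Units.val, Units.val_injective⟩
  calc _ = ∑ x ∈ ({g | g ^ p ^ k = 1} : Finset (ZMod (p ^ α))ˣ).map e, x := (sum_map _ _ _).symm
    _ = _ := by
      rw [sum_eq_card_of_two_sub_mem h2, card_map, hcard]
      intro x hx
      obtain ⟨g, hg, rfl⟩ := mem_map.1 hx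
      rw [mem_filter, hmem] at hg
      have hf : f (2 - g) = 1 := by rw [map_sub, hg.2, map_ofNat]; norm_num
      have hu := isUnit_of_isUnit_castHom_prime_pow hp (Nat.sub_pos_of_lt hk) (Nat.sub_le α k)
        (hf ▸ isUnit_one)
      exact mem_map.2 ⟨hu.unit, mem_filter.2 ⟨mem_univ _, (hmem _).2 hf⟩, rfl⟩

theorem sum_units_pow_eq_one_eq_zero (hp : p.Prime) (hodd : p ≠ 2) {α d : ℕ} [NeZero (p ^ α)]
    (hα : 0 < α) (hd : d ∣ (p ^ α).totient) (hdp : ¬ d ∣ p ^ (α - 1)) :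
    ∑ g : (ZMod (p ^ α))ˣ with g ^ d = 1, (g : ZMod (p ^ α)) = 0 := by
  have := isCyclic_units_of_prime_pow p hp hodd α
  obtain ⟨ζ, hζ⟩ : ∃ ζ : (ZMod (p ^ α))ˣ, orderOf ζ = d := by
    obtain ⟨g, hg⟩ := IsCyclic.exists_ofOrder_eq_natCard (α := (ZMod (p ^ α))ˣ)
    rw [Nat.card_eq_fintype_card, card_units_eq_totient] at hg
    exact ⟨_, orderOf_pow_orderOf_div (hg ▸ (Nat.totient_pos.2 (pow_pos hp.pos α)).ne') (hg ▸ hd)⟩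
  have hζ₁ : unitsMap (pow_dvd_pow p hα) ζ ≠ 1 := fun h => hdp <| by
    rw [← hζ, ← card_ker_unitsMap_prime_pow hp one_pos hα]
    exact Subgroup.orderOf_dvd_natCard _ h
  refine Units.sum_pow_eq_one_eq_zero (hζ ▸ pow_orderOf_eq_one ζ) ?_
  have : Fact (p ^ 1).Prime := ⟨(pow_one p).symm ▸ hp⟩
  refine isUnit_of_isUnit_castHom_prime_pow hp one_pos hα (Ne.isUnit ?_)
  rwa [map_sub, map_one, sub_ne_zero, Ne, ← unitsMap_eq_one_iff]

theorem sum_units_pow_eq_one (hp : p.Prime) (hodd : p ≠ 2) {α d : ℕ} [NeZero (p ^ α)]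
    (hα : 0 < α) (hd : d ∣ (p ^ α).totient) :
    ∑ g : (ZMod (p ^ α))ˣ with g ^ d = 1, (g : ZMod (p ^ α)) =
      if d ∣ p ^ (α - 1) then (d : ZMod (p ^ α)) else 0 := by
  split_ifs with hdp
  · obtain ⟨k, hk, rfl⟩ := (Nat.dvd_prime_pow hp).1 hdp
    exact sum_units_pow_prime_pow_eq_one hp hodd (by omega)
  · exact sum_units_pow_eq_one_eq_zero hp hodd hα hd hdp

end ZMod

open Finset in
open scoped Classical in
/-- Cai: for an odd prime `p` and `α ≥ 1`, the sum of all primitive roots modulo `p^α`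
(units of `ZMod (p^α)` of multiplicative order `φ(p^α)`) is `μ(p-1) · φ(p^(α-1))` in `ZMod (p^α)`. -/
theorem sum_primitiveRoots_prime_pow (p α : ℕ) (hp : p.Prime) (hodd : p ≠ 2)
    (hα : 0 < α) :
    haveI : NeZero (p ^ α) := ⟨pow_ne_zero α hp.pos.ne'⟩
    ∑ g ∈ univ.filter (fun g : (ZMod (p ^ α))ˣ => orderOf g = Nat.totient (p ^ α)),
        (g : ZMod (p ^ α)) =
      ((ArithmeticFunction.moebius (p - 1) : ℤ) : ZMod (p ^ α)) *
        ((Nat.totient (p ^ (α - 1)) : ℕ) : ZMod (p ^ α)) := by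
  have : NeZero (p ^ α) := ⟨pow_ne_zero α hp.pos.ne'⟩
  have hn : 0 < (p ^ α).totient := Nat.totient_pos.2 (pow_pos hp.pos α)
  have hdvd : p ^ (α - 1) ∣ (p ^ α).totient := by
    rw [Nat.totient_prime_pow hp hα]
    exact dvd_mul_right _ _
  have hcop : (p ^ (α - 1)).Coprime (p - 1) :=
    .pow_left _ ((Nat.coprime_self_sub_right hp.one_lt.le).2 (Nat.coprime_one_right p))
  rw [sum_orderOf_eq_sum_moebius_smul _ hn]
  calc _ = ∑ d ∈ (p ^ α).totient.divisors with d ∣ p ^ (α - 1),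
        μ ((p ^ α).totient / d) • (d : ZMod (p ^ α)) := by
        rw [sum_filter]
        refine sum_congr rfl fun d hd => ?_
        rw [ZMod.sum_units_pow_eq_one hp hodd hα (Nat.dvd_of_mem_divisors hd), smul_ite, smul_zero]
    _ = ((∑ d ∈ (p ^ (α - 1)).divisors, μ (p ^ (α - 1) * (p - 1) / d) * d : ℤ) : ZMod (p ^ α)) := by
        rw [Nat.divisors_filter_dvd_of_dvd hn.ne' hdvd, Nat.totient_prime_pow hp hα]
        push_cast
        simp only [zsmul_eq_mul]
    _ = _ := by rw [sum_divisors_moebius_mul_div_mul hcop, Int.cast_mul, Int.cast_natCast]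
end

section
/- Let m be a positive integer and let δ be a positive divisor of λ(m), where λ is the Carmichael function. Then the product over all units a of ℤ/mℤ whose multiplicative order equals δ is congruent to -1 modulo m if δ = 2 and the unit group of ℤ/mℤ is cyclic (i.e., m has a primitive root), and is congruent to 1 modulo m otherwise. -/
open Finset

/-- The Carmichael function `λ(m)`: the exponent of the group of units of `ℤ/mℤ`. -/
noncomputable def carmichael (m : ℕ) : ℕ := Monoid.exponent (ZMod m)ˣ

/-!
Pairing each unit with its inverse shows that the units of a given order `δ ≠ 2` multiply to `1`.
For `δ = 2` the product is that of the whole subgroup `{x | x ^ 2 = 1}`; multiplication by an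
involution `t` pairs `x` with `t * x`, each pair multiplying to `t`, so the product is
`t ^ (n / 2)` with `n` the size of that subgroup, whichever involution `t` is used. Two distinct
involutions therefore force `n / 2` to be even and the product to be `1`.
Finally `(ZMod m)ˣ` is cyclic exactly when `±1` are the only square roots of `1`: if `m` is not
`p ^ v`, `2 * p ^ v` or `2 ^ e` with `e ≤ 2` (the cyclic cases), then either `m = a * b` with
`a, b > 2` coprime, and `(1, -1)` under the Chinese remainder theorem is another root, or
`m = 2 ^ e` with `e ≥ 3`, and `2 ^ (e - 1) + 1` is one.
-/

theorem Finset.prod_eq_pow_card_div_two_of_involution {ι M : Type*} [CommMonoid M]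
    {s : Finset ι} {f : ι → M} {c : M} (g : ι → ι) (hc : ∀ a ∈ s, f a * f (g a) = c)
    (hne : ∀ a ∈ s, g a ≠ a) (hmem : ∀ a ∈ s, g a ∈ s) (hinv : ∀ a ∈ s, g (g a) = a) :
    ∏ x ∈ s, f x = c ^ (#s / 2) := by
  classical
  induction s using Finset.strongInduction with | H s ih => ?_
  obtain rfl | ⟨x, hx⟩ := s.eq_empty_or_nonempty
  · simp
  have hpair : {x, g x} ⊆ s := by simp [insert_subset_iff, hx, hmem x hx]
  have hrest : ∀ a ∈ s \ {x, g x}, g a ∈ s \ {x, g x} := by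
    simp only [mem_sdiff, mem_insert, mem_singleton, not_or]
    rintro a ⟨ha, hax, hagx⟩
    refine ⟨hmem a ha, fun h => hagx ?_, fun h => hax ?_⟩
    · rw [← h, hinv a ha]
    · rw [← hinv a ha, h, hinv x hx]
  have hcard : 2 ≤ #s := by simpa [card_pair (hne x hx).symm] using card_le_card hpair
  rw [← prod_sdiff hpair, prod_pair (hne x hx).symm, hc x hx,
    ih _ (sdiff_ssubset hpair (by simp)) (fun a ha => hc a (mem_sdiff.1 ha).1)
      (fun a ha => hne a (mem_sdiff.1 ha).1) hrest (fun a ha => hinv a (mem_sdiff.1 ha).1),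
    card_sdiff_of_subset hpair, card_pair (hne x hx).symm, ← pow_succ]
  congr 1
  omega

section FiniteCommGroup

variable {G : Type*} [CommGroup G] [Fintype G]

theorem prod_filter_orderOf_eq_of_ne_two {δ : ℕ} (hδ : δ ≠ 2) :
    ∏ a ∈ univ.filter (fun a : G => orderOf a = δ), a = 1 := by
  refine prod_involution (fun a _ => a⁻¹) (fun a _ => mul_inv_cancel a) ?_
    (fun a ha => by simpa using ha) (fun a _ => inv_inv a)
  intro a ha ha1 hinv
  rw [mem_filter] at ha
  exact hδ (ha.2 ▸ orderOf_eq_prime (by rw [sq, mul_eq_one_iff_eq_inv, hinv]) ha1)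

variable [DecidableEq G]

theorem prod_filter_orderOf_eq_two :
    ∏ a ∈ univ.filter (fun a : G => orderOf a = 2), a =
      ∏ a ∈ univ.filter (fun a : G => a ^ 2 = 1), a := by
  have : univ.filter (fun a : G => orderOf a = 2) =
      (univ.filter (fun a : G => a ^ 2 = 1)).erase 1 := by
    ext a
    simp [orderOf_eq_prime_iff, and_comm]
  rw [this, prod_erase (f := fun a : G => a) _ rfl]

theorem prod_filter_sq_eq_one_of_forall {t : G} (ht : t ^ 2 = 1)
    (h : ∀ x : G, x ^ 2 = 1 → x = 1 ∨ x = t) :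
    ∏ a ∈ univ.filter (fun a : G => a ^ 2 = 1), a = t := by
  have : univ.filter (fun a : G => a ^ 2 = 1) = {1, t} := by
    ext x
    simp only [mem_filter, mem_univ, true_and, mem_insert, mem_singleton]
    exact ⟨h x, by rintro (rfl | rfl) <;> simp [ht]⟩
  rw [this, prod_insert_one (f := fun a : G => a) rfl, prod_singleton]

theorem prod_filter_sq_eq_one_of_ne {t₁ t₂ : G} (h₁ : t₁ ^ 2 = 1) (h₂ : t₂ ^ 2 = 1)
    (ht₁ : t₁ ≠ 1) (ht₂ : t₂ ≠ 1) (hne : t₁ ≠ t₂) :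
    ∏ a ∈ univ.filter (fun a : G => a ^ 2 = 1), a = 1 := by
  set S := univ.filter (fun a : G => a ^ 2 = 1)
  have prod_eq_pow : ∀ t : G, t ^ 2 = 1 → t ≠ 1 → ∏ a ∈ S, a = t ^ (#S / 2) := fun t ht ht1 =>
    prod_eq_pow_card_div_two_of_involution (t * ·)
      (fun a ha => by rw [mul_left_comm, ← sq, (mem_filter.1 ha).2, mul_one])
      (fun a _ h => ht1 (mul_eq_right.1 h))
      (fun a ha => by simp [S, mul_pow, ht, (mem_filter.1 ha).2])
      (fun a _ => by rw [← mul_assoc, ← sq, ht, one_mul])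
  obtain ⟨k, hk | hk⟩ := Nat.even_or_odd' (#S / 2)
  · rw [prod_eq_pow t₁ h₁ ht₁, hk, pow_mul, h₁, one_pow]
  · have odd_pow : ∀ t : G, t ^ 2 = 1 → t ^ (2 * k + 1) = t := fun t ht => by
      rw [pow_succ, pow_mul, ht, one_pow, one_mul]
    refine absurd ?_ hne
    rw [← odd_pow t₁ h₁, ← odd_pow t₂ h₂, ← hk, ← prod_eq_pow t₁ h₁ ht₁, ← prod_eq_pow t₂ h₂ ht₂]

end FiniteCommGroup

theorem IsCyclic.eq_one_or_eq_of_sq_eq_one {G : Type*} [Group G] [Finite G] [IsCyclic G]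
    {t x : G} (ht : t ^ 2 = 1) (ht1 : t ≠ 1) (hx : x ^ 2 = 1) : x = 1 ∨ x = t := by
  classical
  have := Fintype.ofFinite G
  by_contra! hxt
  have hsub : ({x, 1, t} : Finset G) ⊆ univ.filter (fun a : G => a ^ 2 = 1) := by
    simp [insert_subset_iff, hx, ht]
  have := (card_le_card hsub).trans (IsCyclic.card_pow_eq_one_le two_pos)
  rw [card_insert_of_notMem (by simp [hxt.1, hxt.2]), card_pair ht1.symm] at this
  omega

namespace ZMod

theorem units_neg_one_ne_one {m : ℕ} [Fact (2 < m)] : (-1 : (ZMod m)ˣ) ≠ 1 := by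
  simpa [Units.ext_iff] using neg_one_ne_one (n := m)

theorem exists_sq_eq_one_of_coprime {a b : ℕ} (hab : a.Coprime b) (ha : 2 < a) (hb : 2 < b) :
    ∃ x : ZMod (a * b), x ^ 2 = 1 ∧ x ≠ 1 ∧ x ≠ -1 := by
  have : Fact (2 < a) := ⟨ha⟩
  have : Fact (2 < b) := ⟨hb⟩
  let e := chineseRemainder hab
  refine ⟨e.symm (1, -1), e.injective (by simp [sq]), fun h => ?_, fun h => ?_⟩
  · have := congrArg (Prod.snd ∘ e) h
    simp at this
    exact neg_one_ne_one this
  · have := congrArg (Prod.fst ∘ e) h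
    simp at this
    exact neg_one_ne_one this.symm

theorem exists_sq_eq_one_two_pow (e : ℕ) :
    ∃ x : ZMod (2 ^ (e + 3)), x ^ 2 = 1 ∧ x ≠ 1 ∧ x ≠ -1 := by
  have hcast : ∀ k : ℕ, (k : ZMod (2 ^ (e + 3))) = 0 ↔ 2 ^ (e + 3) ∣ k :=
    fun k => natCast_eq_zero_iff k _
  have hlt : ∀ k, 0 < k → k ≤ 2 ^ (e + 2) + 2 → ¬ 2 ^ (e + 3) ∣ k := fun k hk hle hdvd => by
    have := Nat.le_of_dvd hk hdvd
    rw [pow_add] at this hle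
    norm_num at this hle
    have := Nat.one_le_two_pow (n := e)
    omega
  refine ⟨2 ^ (e + 2) + 1, ?_, fun h => ?_, fun h => ?_⟩
  · have : ((2 ^ (e + 3) * (2 ^ (e + 1) + 1) : ℕ) : ZMod (2 ^ (e + 3))) = 0 :=
      (hcast _).2 (dvd_mul_right _ _)
    push_cast at this
    linear_combination this
  · refine hlt (2 ^ (e + 2)) (by positivity) (by omega) ((hcast _).1 ?_)
    push_cast
    linear_combination h
  · refine hlt (2 ^ (e + 2) + 2) (by positivity) le_rfl ((hcast _).1 ?_)
    push_cast
    linear_combination h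

theorem isCyclic_units_of_forall_sq_eq_one {m : ℕ}
    (h : ∀ u : (ZMod m)ˣ, u ^ 2 = 1 → u = 1 ∨ u = -1) : IsCyclic (ZMod m)ˣ := by
  have hsq : ∀ x : ZMod m, x ^ 2 = 1 → x = 1 ∨ x = -1 := fun x hx => by
    let u := Units.mkOfMulEqOne x x (by rw [← sq, hx])
    have hu : u ^ 2 = 1 := Units.ext <| by
      rw [Units.val_pow_eq_pow_val, Units.val_mkOfMulEqOne, hx, Units.val_one]
    rcases h u hu with h | h
    · exact .inl (by simpa [u] using congrArg Units.val h)
    · exact .inr (by simpa [u] using congrArg Units.val h)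
  rcases eq_or_ne m 0 with rfl | hm0
  · exact isCyclic_units_zero
  by_cases hodd : ∃ p, p.Prime ∧ p ≠ 2 ∧ p ∣ m
  · obtain ⟨p, hp, hp2, hpm⟩ := hodd
    obtain ⟨v, r, hpr, rfl⟩ := Nat.exists_eq_pow_mul_and_not_dvd hm0 p hp.ne_one
    have hv : v ≠ 0 := by rintro rfl; exact hpr (by simpa using hpm)
    have hpv : 2 < p ^ v := (hp.two_le.lt_of_ne' hp2).trans_le (Nat.le_self_pow hv p)
    have hcyc := isCyclic_units_of_prime_pow p hp hp2 v
    obtain rfl | rfl | hr : r = 1 ∨ r = 2 ∨ 2 < r := by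
      have : r ≠ 0 := by rintro rfl; simp at hm0
      omega
    · rwa [mul_one]
    · rwa [mul_comm, isCyclic_units_two_mul_iff_of_odd _ (hp.odd_of_ne_two hp2).pow]
    · obtain ⟨x, hx, hx1, hx2⟩ :=
        exists_sq_eq_one_of_coprime ((hp.coprime_iff_not_dvd.2 hpr).pow_left v) hpv hr
      exact absurd (hsq x hx) (by tauto)
  · push Not at hodd
    obtain ⟨k, rfl⟩ : ∃ k, m = 2 ^ k := ⟨_, Nat.eq_prime_pow_of_unique_prime_dvd hm0
      fun hd hdm => by_contra fun hd2 => hodd _ hd hd2 hdm⟩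
    obtain hk | ⟨e, rfl⟩ : k ≤ 2 ∨ ∃ e, k = e + 3 := by
      rcases le_or_gt k 2 with hk | hk
      · exact .inl hk
      · exact .inr ⟨k - 3, by omega⟩
    · exact (isCyclic_units_two_pow_iff k).2 hk
    · obtain ⟨x, hx, hx1, hx2⟩ := exists_sq_eq_one_two_pow e
      exact absurd (hsq x hx) (by tauto)

theorem subsingleton_units_of_le_two {m : ℕ} [NeZero m] (hm : m ≤ 2) :
    Subsingleton (ZMod m)ˣ := by
  have := NeZero.pos m
  interval_cases m <;> infer_instance

theorem isCyclic_units_iff_forall_sq_eq_one {m : ℕ} [NeZero m] :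
    IsCyclic (ZMod m)ˣ ↔ ∀ u : (ZMod m)ˣ, u ^ 2 = 1 → u = 1 ∨ u = -1 := by
  refine ⟨fun _ u hu => ?_, isCyclic_units_of_forall_sq_eq_one⟩
  rcases le_or_gt m 2 with hm | hm
  · have := subsingleton_units_of_le_two hm
    exact .inl (Subsingleton.elim _ _)
  · have : Fact (2 < m) := ⟨hm⟩
    exact IsCyclic.eq_one_or_eq_of_sq_eq_one neg_one_sq units_neg_one_ne_one hu

end ZMod

open scoped Classical in
theorem prod_units_orderOf_eq_general (m : ℕ) [NeZero m] (δ : ℕ) :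
    ∏ a ∈ univ.filter (fun a : (ZMod m)ˣ => orderOf a = δ), (a : ZMod m) =
      if δ = 2 ∧ IsCyclic (ZMod m)ˣ then -1 else 1 := by
  rw [← Units.coe_prod]
  split_ifs with h
  · obtain ⟨rfl, hcyc⟩ := h
    rw [prod_filter_orderOf_eq_two, prod_filter_sq_eq_one_of_forall neg_one_sq
      (ZMod.isCyclic_units_iff_forall_sq_eq_one.1 hcyc), Units.val_neg, Units.val_one]
  rcases ne_or_eq δ 2 with hδ | rfl
  · rw [prod_filter_orderOf_eq_of_ne_two hδ, Units.val_one]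
  have hcyc : ¬IsCyclic (ZMod m)ˣ := fun hcyc => h ⟨rfl, hcyc⟩
  have : Fact (2 < m) := ⟨by
    by_contra! hm
    have := ZMod.subsingleton_units_of_le_two hm
    exact hcyc isCyclic_of_subsingleton⟩
  rw [ZMod.isCyclic_units_iff_forall_sq_eq_one] at hcyc
  push Not at hcyc
  obtain ⟨u, hu, hu1, hu2⟩ := hcyc
  rw [prod_filter_orderOf_eq_two,
    prod_filter_sq_eq_one_of_ne hu neg_one_sq hu1 ZMod.units_neg_one_ne_one hu2, Units.val_one]

open scoped Classical in
/-- For `m` a positive integer and `δ` a positive divisor of `λ(m)`, the product of all units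
of `ℤ/mℤ` of multiplicative order `δ` is `-1` if `δ = 2` and `m` has a primitive root
(i.e. the unit group is cyclic), and `1` otherwise. -/
theorem prod_units_orderOf_eq (m : ℕ) [NeZero m] (δ : ℕ) (hδpos : 0 < δ)
    (hδ : δ ∣ carmichael m) :
    ∏ a ∈ univ.filter (fun a : (ZMod m)ˣ => orderOf a = δ), (a : ZMod m) =
      if δ = 2 ∧ IsCyclic (ZMod m)ˣ then -1 else 1 :=
  prod_units_orderOf_eq_general m δ
end

section
/- Let m be an integer with m > 2. Then the sum over all units a of ℤ/mℤ whose multiplicative order equals 2 is congruent to -1 modulo m. -/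
open Finset in
open scoped Classical in
/-- For `m > 2`, the sum of all units of `ℤ/mℤ` of multiplicative order `2` is `-1` in `ZMod m`. -/
theorem sum_units_orderOf_two (m : ℕ) (hm : 2 < m) :
    haveI : NeZero m := ⟨by omega⟩
    ∑ a ∈ univ.filter (fun a : (ZMod m)ˣ => orderOf a = 2), (a : ZMod m) = -1 := by
  haveI : NeZero m := ⟨by omega⟩
  haveI : Fact (1 < m) := ⟨by omega⟩
  classical
  set T := Finset.univ.filter (fun a : (ZMod m)ˣ => orderOf a = 2) with hT
  set S := Finset.univ.filter (fun a : (ZMod m)ˣ => a ^ 2 = 1) with hS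
  have hST : S = insert 1 T := by
    ext a
    simp only [hS, hT, Finset.mem_insert, Finset.mem_filter, Finset.mem_univ, true_and]
    constructor
    · intro h
      by_cases h1 : a = 1
      · exact Or.inl h1
      · exact Or.inr (orderOf_eq_prime h h1)
    · rintro (rfl | h)
      · simp
      · rw [← h]; exact pow_orderOf_eq_one a
  have h1T : (1 : (ZMod m)ˣ) ∉ T := by simp [hT]
  have hfix : ∀ a : (ZMod m)ˣ, -a ≠ a := by
    intro a h
    have h2 : (2 : ZMod m) * (a : ZMod m) = 0 := by
      have := congrArg (Units.val) h
      push_cast at this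
      linear_combination -this
    have h2' : (2 : ZMod m) = 0 := by
      have := congrArg (· * ((a⁻¹ : (ZMod m)ˣ) : ZMod m)) h2
      simpa [mul_assoc] using this
    have hdvd : (m : ℕ) ∣ 2 := by
      have : ((2 : ℕ) : ZMod m) = 0 := by exact_mod_cast h2'
      exact (ZMod.natCast_eq_zero_iff 2 m).mp this
    have := Nat.le_of_dvd (by norm_num) hdvd
    omega
  have hsum : ∑ a ∈ S, (a : ZMod m) = 0 := by
    refine Finset.sum_involution (fun a _ => -a) ?_ ?_ ?_ ?_
    · intro a ha
      push_cast
      ring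
    · intro a ha _; exact hfix a
    · intro a ha
      simp only [hS, Finset.mem_filter, Finset.mem_univ, true_and] at ha ⊢
      rw [neg_pow, ha]; norm_num
    · intro a ha; exact neg_neg a
  rw [hST, Finset.sum_insert h1T] at hsum
  have h0 : (1 : ZMod m) + ∑ a ∈ T, (a : ZMod m) = 0 := by simpa using hsum
  linear_combination h0
end

section
/- Let m be a positive integer and let δ be a positive integer divisible by 4. Then the sum over all units a of ℤ/mℤ whose multiplicative order equals δ is congruent to 0 modulo m. -/
open Finset in
open scoped Classical in
/-- For a positive integer `m` and a positive integer `δ` divisible by `4`, the sum of all units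
of `ℤ/mℤ` of multiplicative order `δ` is `0` in `ZMod m`. -/
theorem sum_units_orderOf_four_dvd (m δ : ℕ) [NeZero m] (hδpos : 0 < δ) (h4 : 4 ∣ δ) :
    ∑ a ∈ univ.filter (fun a : (ZMod m)ˣ => orderOf a = δ), (a : ZMod m) = 0 := by
  have key : ∀ a : (ZMod m)ˣ, orderOf a = δ → orderOf (-a) = δ := by
    intro a ha
    have hdvd : orderOf (-a) ∣ δ := by
      apply orderOf_dvd_of_pow_eq_one
      rw [neg_pow]
      have hev : Even δ := by obtain ⟨k, hk⟩ := h4; exact ⟨2 * k, by omega⟩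
      rw [hev.neg_one_pow, one_mul, ← ha, pow_orderOf_eq_one]
    set n := orderOf (-a) with hn
    rcases Nat.even_or_odd n with he | ho
    · have : a ^ n = 1 := by
        have : (-a) ^ n = 1 := pow_orderOf_eq_one _
        rwa [neg_pow, he.neg_one_pow, one_mul] at this
      have h1 : δ ∣ n := ha ▸ orderOf_dvd_of_pow_eq_one this
      exact Nat.dvd_antisymm hdvd h1
    · exfalso
      have h2 : a ^ (2 * n) = 1 := by
        have h1 : (-a) ^ n = 1 := pow_orderOf_eq_one _
        rw [neg_pow, ho.neg_one_pow, neg_one_mul] at h1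
        have hc : a ^ n = -1 := by
          have := congrArg Neg.neg h1; simpa using this
        calc a ^ (2 * n) = (a ^ n) ^ 2 := by rw [← pow_mul, Nat.mul_comm]
          _ = 1 := by rw [hc, neg_one_sq]
      have h3 : δ ∣ 2 * n := ha ▸ orderOf_dvd_of_pow_eq_one h2
      have h5 : 4 ∣ 2 * n := h4.trans h3
      obtain ⟨t, ht⟩ := ho
      omega
  apply Finset.sum_involution (fun a _ => -a)
  · intro a _; push_cast; ring
  · intro a ha _ h
    have hmem := Finset.mem_filter.mp ha
    have hδ : orderOf a = δ := hmem.2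
    have h2a : (2 : ZMod m) * (a : ZMod m) = 0 := by
      have := congrArg (Units.val) h
      push_cast at this
      linear_combination -this
    have h1 : ((2 : ℕ) : ZMod m) = 0 := by
      push_cast
      calc (2 : ZMod m) = 2 * ↑a * ↑(a⁻¹) := by rw [mul_assoc, Units.mul_inv, mul_one]
        _ = 0 := by rw [h2a, zero_mul]
    have hm2 : m ∣ 2 := (ZMod.natCast_eq_zero_iff 2 m).mp h1
    have hcard : orderOf a ∣ Fintype.card (ZMod m)ˣ := orderOf_dvd_card
    have hδle : δ ≤ Fintype.card (ZMod m)ˣ :=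
      Nat.le_of_dvd Fintype.card_pos (hδ ▸ hcard)
    have : Fintype.card (ZMod m)ˣ = Nat.totient m := ZMod.card_units_eq_totient m
    have h2 : Nat.totient m ≤ m := Nat.totient_le m
    have h3 : m ≤ 2 := Nat.le_of_dvd (by norm_num) hm2
    omega
  · intro a _; simp
  · intro a ha
    rw [Finset.mem_filter] at ha ⊢
    exact ⟨Finset.mem_univ _, key a ha.2⟩
end

section
/- Let m ≥ 3 be an integer such that the regular m-gon is constructible by compass and straightedge, i.e., φ(m) is a power of 2. Let δ be a divisor of λ(m) with δ > 2, where λ is the Carmichael function. Then the sum over all units a of ℤ/mℤ whose multiplicative order equals δ is congruent to 0 modulo m. -/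
open Finset

/-!
Since `φ(m)` is a power of `2`, so is `δ ∣ λ(m) ∣ φ(m)`, and `δ > 2` forces `4 ∣ δ`. Then `a ↦ -a`
preserves the order `δ`, because `(-a)^n = a^n` for even `n` and the order of an element of
`2`-power order is detected by its powers `a^(δ/2) ≠ 1 = a^δ`. As `2 ≠ 0` in `ℤ/mℤ` for `m ≥ 3`, no
unit is fixed by negation, so the units of order `δ` cancel in pairs `a + (-a) = 0`.
-/

theorem carmichael_dvd_totient (m : ℕ) [NeZero m] : carmichael m ∣ m.totient := by
  simpa only [carmichael, Nat.card_eq_fintype_card, ZMod.card_units_eq_totient] using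
    Group.exponent_dvd_nat_card (G := (ZMod m)ˣ)

theorem ZMod.two_ne_zero {m : ℕ} (hm : 3 ≤ m) : (2 : ZMod m) ≠ 0 := by
  have h := ZMod.val_two_eq_two_mod m
  rw [Nat.mod_eq_of_lt (by omega)] at h
  intro h2
  simp [h2] at h

theorem orderOf_neg_of_orderOf_eq_two_pow {M : Type*} [Monoid M] [HasDistribNeg M] {a : M}
    {n : ℕ} (ha : orderOf a = 2 ^ (n + 2)) : orderOf (-a) = 2 ^ (n + 2) := by
  have even_two_pow (k : ℕ) : Even (2 ^ (k + 1)) := (Nat.even_pow' k.succ_ne_zero).mpr even_two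
  refine orderOf_eq_prime_pow ?_ ?_
  · rw [(even_two_pow n).neg_pow]
    exact pow_ne_one_of_lt_orderOf (by positivity) (ha ▸ Nat.pow_lt_pow_succ one_lt_two)
  · rw [(even_two_pow (n + 1)).neg_pow, ← ha, pow_orderOf_eq_one]

theorem Units.neg_ne_self {R : Type*} [Ring R] (h2 : (2 : R) ≠ 0) (u : Rˣ) : -u ≠ u := by
  intro hu
  have : (2 : R) * u = 0 := by
    rw [two_mul]
    nth_rewrite 1 [← hu]
    rw [Units.val_neg, neg_add_cancel]
  exact h2 ((IsUnit.mul_left_eq_zero u.isUnit).mp this)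

theorem Units.sum_val_eq_zero_of_neg_mem {R : Type*} [Ring R] (h2 : (2 : R) ≠ 0)
    {s : Finset Rˣ} (hs : ∀ u ∈ s, -u ∈ s) : ∑ u ∈ s, (u : R) = 0 :=
  sum_involution (fun u _ => -u) (fun u _ => by rw [Units.val_neg, add_neg_cancel])
    (fun u _ _ => u.neg_ne_self h2) hs (fun u _ => neg_neg u)

open scoped Classical in
/-- If the regular `m`-gon is constructible by compass and straightedge (for `m ≥ 3`, this means
`φ(m)` is a power of `2`) and `δ` is a divisor of `λ(m)` with `δ > 2`, then the sum of all units
of `ℤ/mℤ` of multiplicative order `δ` is `0` in `ZMod m`. -/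
theorem sum_units_orderOf_constructible (m δ : ℕ) (hm : 3 ≤ m)
    (hconstr : ∃ k : ℕ, Nat.totient m = 2 ^ k)
    (hδ : δ ∣ carmichael m) (hδ2 : 2 < δ) :
    haveI : NeZero m := ⟨by omega⟩
    ∑ a ∈ univ.filter (fun a : (ZMod m)ˣ => orderOf a = δ), (a : ZMod m) = 0 := by
  have : NeZero m := ⟨by omega⟩
  obtain ⟨k, hk⟩ := hconstr
  obtain ⟨t, -, rfl⟩ :=
    (Nat.dvd_prime_pow Nat.prime_two).mp (hk ▸ hδ.trans (carmichael_dvd_totient m))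
  obtain ⟨n, rfl⟩ := Nat.exists_eq_add_of_le'
    ((Nat.pow_lt_pow_iff_right (by norm_num : 1 < 2)).mp (pow_one 2 ▸ hδ2))
  refine Units.sum_val_eq_zero_of_neg_mem (ZMod.two_ne_zero hm) fun a ha => ?_
  simp only [mem_filter, mem_univ, true_and] at ha ⊢
  exact orderOf_neg_of_orderOf_eq_two_pow ha
end

section
/- Let α ≥ 4 and β be integers with 2 ≤ β ≤ α - 2, and set δ = 2^β. Then the sum over all units a of ℤ/2^αℤ whose multiplicative order equals δ is congruent to 0 modulo 2^α. -/
open Finset in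
open scoped Classical in
/-- For `α ≥ 4` and `2 ≤ β ≤ α - 2`, the sum of all units of `ℤ/2^αℤ` of multiplicative order
`2^β` is `0` in `ZMod (2^α)`. -/
theorem sum_units_orderOf_two_pow (α β : ℕ) (hα : 4 ≤ α) (hβ : 2 ≤ β) (hβα : β ≤ α - 2) :
    haveI : NeZero (2 ^ α) := ⟨pow_ne_zero α two_ne_zero⟩
    ∑ a ∈ univ.filter (fun a : (ZMod (2 ^ α))ˣ => orderOf a = 2 ^ β),
      (a : ZMod (2 ^ α)) = 0 := by
  haveI : NeZero (2 ^ α) := ⟨pow_ne_zero α two_ne_zero⟩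
  have hne : ∀ a : (ZMod (2 ^ α))ˣ, -a ≠ a := by
    intro a h
    have h2 : ((2 : ZMod (2 ^ α))) * (a : ZMod (2 ^ α)) = 0 := by
      have := congrArg (Units.val) h
      rw [Units.val_neg] at this
      ring_nf
      linear_combination (a : ZMod (2 ^ α)) - this
    have h2' : (2 : ZMod (2 ^ α)) = 0 := by
      have := congrArg (· * ((a⁻¹ : (ZMod (2 ^ α))ˣ) : ZMod (2 ^ α))) h2
      simpa [mul_assoc] using this
    have : (2 ^ α : ℕ) ∣ 2 := by
      have := (ZMod.natCast_eq_zero_iff 2 (2 ^ α)).mp (by exact_mod_cast h2')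
      exact this
    have h4 : (2:ℕ)^4 ≤ 2^α := Nat.pow_le_pow_right (by norm_num) hα
    have := Nat.le_of_dvd (by norm_num) this
    omega
  have hord : ∀ a : (ZMod (2 ^ α))ˣ, orderOf a = 2 ^ β → orderOf (-a) = 2 ^ β := by
    intro a ha
    have hβ1 : β = (β - 1) + 1 := by omega
    have heven : Even (2 ^ (β - 1)) := by
      refine (Nat.even_pow).mpr ⟨even_two, by omega⟩
    have hpow : (-a) ^ (2 ^ (β - 1)) = a ^ (2 ^ (β - 1)) := heven.neg_pow a
    rw [hβ1]
    refine orderOf_eq_prime_pow ?_ ?_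
    · rw [hpow]
      intro h
      have := orderOf_dvd_of_pow_eq_one h
      rw [ha] at this
      have := (Nat.pow_dvd_pow_iff_le_right (x := 2) (by norm_num)).mp this
      omega
    · have : (-a) ^ (2 ^ β) = a ^ (2 ^ β) := by
        have : Even (2 ^ β) := (Nat.even_pow).mpr ⟨even_two, by omega⟩
        exact this.neg_pow a
      rw [← hβ1, this, ← ha, pow_orderOf_eq_one]
  refine Finset.sum_involution (fun a _ => -a) ?_ ?_ ?_ ?_
  · intro a _
    simp [Units.val_neg]
  · intro a _ _
    exact hne a
  · intro a ha
    simp only [mem_filter, mem_univ, true_and] at ha ⊢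
    exact hord a ha
  · intro a _
    simp
end

section
/- Let p and q be two distinct odd primes and let δ be a positive divisor of λ(pq) = lcm(p-1, q-1). Write g = gcd(δ, p-1). Then the sum over all units a of ℤ/pqℤ whose multiplicative order equals δ is congruent, modulo p, to μ(g) · I(gcd(δ/g, p-1)) · φ(δ)/φ(g), where I(n) equals 1 if n = 1 and 0 otherwise, μ is the Möbius function, and φ is Euler's totient function (note φ(g) divides φ(δ) since g divides δ). -/
/-!
Via the Chinese remainder theorem `(ℤ/pqℤ)ˣ ≅ (ℤ/pℤ)ˣ × (ℤ/qℤ)ˣ`, the sum modulo `p` of the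
`n`-th roots of unity of `(ℤ/pqℤ)ˣ` is the sum of the `n`-th roots of unity of `𝔽_p`, which is
`0` unless that cyclic subgroup is trivial, times the number `gcd(n, q - 1)` of `n`-th roots of
unity of `𝔽_q`. Möbius inversion over the divisors of `δ` turns these sums into the sum over the
units of exact order `δ`. The resulting Dirichlet convolution and the closed form are both
multiplicative in `δ`, so it suffices to compare them at the prime powers dividing
`lcm(p - 1, q - 1)`.
-/

open Finset ArithmeticFunction
open scoped ArithmeticFunction.Moebius

/-- Summing the `n`-th roots of unity of `(ℤ/pqℤ)ˣ` modulo `p` gives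
`coprimeGcd (p - 1) (q - 1) n`. -/
def coprimeGcd (P Q : ℕ) : ArithmeticFunction ℤ :=
  ⟨fun d => if d ≠ 0 ∧ d.Coprime P then (d.gcd Q : ℤ) else 0, by simp⟩

theorem coprimeGcd_apply (P Q d : ℕ) :
    coprimeGcd P Q d = if d ≠ 0 ∧ d.Coprime P then (d.gcd Q : ℤ) else 0 := rfl

theorem isMultiplicative_coprimeGcd (P Q : ℕ) : (coprimeGcd P Q).IsMultiplicative := by
  refine ⟨by simp [coprimeGcd_apply], fun {m n} hmn => ?_⟩
  simp only [coprimeGcd_apply, mul_ne_zero_iff, Nat.coprime_mul_iff_left, hmn.mul_gcd,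
    Nat.cast_mul]
  split_ifs <;> simp_all

theorem moebius_mul_apply_prime_pow_succ (f : ArithmeticFunction ℤ) {r : ℕ} (hr : r.Prime)
    (k : ℕ) : (μ * f) (r ^ (k + 1)) = f (r ^ (k + 1)) - f (r ^ k) := by
  have hμ : ∀ i, μ (r ^ (i + 1 + 1)) = 0 := fun i => by
    rw [moebius_apply_prime_pow hr (by omega), if_neg (by omega)]
  rw [mul_apply, Nat.sum_divisorsAntidiagonal (fun a b => (μ a : ℤ) * f b),
    Nat.sum_divisors_prime_pow hr, sum_range_succ', sum_range_succ']
  simp only [hμ, zero_mul, sum_const_zero, zero_add, pow_zero, Nat.div_one, moebius_apply_one,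
    pow_one, moebius_apply_prime hr]
  rw [pow_succ', Nat.mul_div_cancel_left _ hr.pos]
  ring

def orderSumResidue (P δ : ℕ) : ℤ :=
  μ (δ.gcd P) * (if (δ / δ.gcd P).gcd P = 1 then 1 else 0) *
    (δ.totient / (δ.gcd P).totient : ℕ)

theorem orderSumResidue_one (P : ℕ) : orderSumResidue P 1 = 1 := by
  simp [orderSumResidue]

theorem orderSumResidue_mul (P : ℕ) {a b : ℕ} (hab : a.Coprime b) :
    orderSumResidue P (a * b) = orderSumResidue P a * orderSumResidue P b := by
  have hga := Nat.gcd_dvd_left a P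
  have hgb := Nat.gcd_dvd_left b P
  have hg : (a.gcd P).Coprime (b.gcd P) := (hab.coprime_dvd_left hga).coprime_dvd_right hgb
  have hquot : (a / a.gcd P).Coprime (b / b.gcd P) :=
    (hab.coprime_div_left hga).coprime_div_right hgb
  have htot : (a * b).totient / (a.gcd P * b.gcd P).totient =
      a.totient / (a.gcd P).totient * (b.totient / (b.gcd P).totient) := by
    rw [Nat.totient_mul hab, Nat.totient_mul hg,
      Nat.div_mul_div_comm (Nat.totient_dvd_of_dvd hga) (Nat.totient_dvd_of_dvd hgb)]
  simp only [orderSumResidue, hab.mul_gcd, ← Nat.div_mul_div_comm hga hgb, hquot.mul_gcd, htot,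
    isMultiplicative_moebius.map_mul_of_coprime hg, mul_eq_one]
  split_ifs <;> simp_all
  ring

theorem orderSumResidue_of_coprime {P δ : ℕ} (h : δ.Coprime P) :
    orderSumResidue P δ = δ.totient := by
  simp [orderSumResidue, Nat.Coprime.gcd_eq_one h]

theorem orderSumResidue_prime_pow_of_dvd {P r : ℕ} (hr : r.Prime) (hrP : r ∣ P) (k : ℕ) :
    orderSumResidue P (r ^ (k + 1)) = if k = 0 then -1 else 0 := by
  rcases k with _ | k
  · simp [orderSumResidue, Nat.gcd_eq_left hrP, hr.pos, moebius_apply_prime hr]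
  -- `gcd(r^(k+2), P) = r^j` with `j ≠ 0`: for `j = 1` the cofactor still shares `r` with `P`,
  -- for `j ≥ 2` the Möbius factor vanishes.
  obtain ⟨j, -, hg⟩ := (Nat.dvd_prime_pow hr).1 (Nat.gcd_dvd_left (r ^ (k + 1 + 1)) P)
  have hrg : r ∣ (r ^ (k + 1 + 1)).gcd P := Nat.dvd_gcd (dvd_pow_self r (by omega)) hrP
  rcases j with _ | _ | j
  · exact absurd (hg ▸ hrg) (by simpa using hr.one_lt.ne')
  · have : ¬ (r ^ (k + 1)).Coprime P :=
      Nat.not_coprime_of_dvd_of_dvd hr.one_lt (dvd_pow_self r k.succ_ne_zero) hrP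
    rw [zero_add, pow_one] at hg
    rw [orderSumResidue, hg, pow_succ, Nat.mul_div_cancel _ hr.pos, if_neg this]
    simp
  · simp [orderSumResidue, hg, moebius_apply_prime_pow hr]

theorem moebius_mul_coprimeGcd_apply_prime_pow {P Q r k : ℕ} (hr : r.Prime)
    (h : r ^ (k + 1) ∣ P.lcm Q) :
    (μ * coprimeGcd P Q) (r ^ (k + 1)) = orderSumResidue P (r ^ (k + 1)) := by
  rw [moebius_mul_apply_prime_pow_succ _ hr]
  by_cases hrP : r ∣ P
  · have hf : ∀ j, coprimeGcd P Q (r ^ j) = if j = 0 then 1 else 0 := by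
      rintro (_ | j)
      · simp [coprimeGcd_apply]
      · simp [coprimeGcd_apply,
          Nat.not_coprime_of_dvd_of_dvd hr.one_lt (dvd_pow_self r j.succ_ne_zero) hrP]
    rw [hf, hf, orderSumResidue_prime_pow_of_dvd hr hrP, if_neg k.succ_ne_zero]
    split_ifs <;> simp
  · have hcop : ∀ j, (r ^ j).Coprime P :=
      fun j => Nat.Coprime.pow_left j ((Nat.Prime.coprime_iff_not_dvd hr).2 hrP)
    have hQ : r ^ (k + 1) ∣ Q := (hcop _).dvd_of_dvd_mul_left (h.trans (Nat.lcm_dvd_mul P Q))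
    have hf : ∀ j ≤ k + 1, coprimeGcd P Q (r ^ j) = (r ^ j : ℕ) := fun j hj => by
      simp [coprimeGcd_apply, hcop, hr.ne_zero, Nat.gcd_eq_left ((pow_dvd_pow r hj).trans hQ)]
    rw [hf _ le_rfl, hf k (by omega), orderSumResidue_of_coprime (hcop _),
      Nat.totient_prime_pow_succ hr]
    push_cast [hr.one_le]
    ring

theorem moebius_mul_coprimeGcd_apply {P Q δ : ℕ} (hδ0 : δ ≠ 0) (hδ : δ ∣ P.lcm Q) :
    (μ * coprimeGcd P Q) δ = orderSumResidue P δ := by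
  rw [(isMultiplicative_moebius.mul (isMultiplicative_coprimeGcd P Q)).multiplicative_factorization
      _ hδ0, Nat.multiplicative_factorization _ (fun _ _ => orderSumResidue_mul P)
      (orderSumResidue_one P) hδ0]
  refine Finsupp.prod_congr fun r hr => ?_
  obtain ⟨k, hk⟩ := Nat.exists_eq_succ_of_ne_zero (Finsupp.mem_support_iff.1 hr)
  have hdvd := (Nat.ordProj_dvd δ r).trans hδ
  rw [hk] at hdvd ⊢
  exact moebius_mul_coprimeGcd_apply_prime_pow (Nat.prime_of_mem_primeFactors hr) hdvd

section

variable {G : Type*} [Group G] [Fintype G] [DecidableEq G]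

theorem sum_filter_pow_eq_one_eq_sum_divisors {M : Type*} [AddCommMonoid M] (f : G → M) {n : ℕ}
    (hn : n ≠ 0) :
    ∑ u with u ^ n = 1, f u = ∑ d ∈ n.divisors, ∑ u with orderOf u = d, f u := by
  rw [← sum_fiberwise_of_maps_to (g := orderOf) fun u hu =>
    Nat.mem_divisors.2 ⟨orderOf_dvd_of_pow_eq_one (mem_filter.1 hu).2, hn⟩]
  refine sum_congr rfl fun d hd => ?_
  rw [filter_filter]
  refine sum_congr (filter_congr fun u _ => ?_) fun _ _ => rfl
  exact and_iff_right_of_imp fun h =>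
    orderOf_dvd_iff_pow_eq_one.1 (h ▸ Nat.dvd_of_mem_divisors hd)

theorem sum_filter_orderOf_eq_sum_moebius_smul {M : Type*} [AddCommGroup M] (f : G → M) {n : ℕ}
    (hn : 0 < n) :
    ∑ u with orderOf u = n, f u =
      ∑ x ∈ n.divisorsAntidiagonal, μ x.1 • ∑ u with u ^ x.2 = 1, f u :=
  (sum_eq_iff_sum_smul_moebius_eq.1
    (fun _ hm => (sum_filter_pow_eq_one_eq_sum_divisors f hm.ne').symm) n hn).symm

theorem sum_filter_pow_eq_one_fst {H K : Type*} [Group H] [Group K] [Fintype H] [Fintype K]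
    [DecidableEq H] [DecidableEq K] {M : Type*} [AddCommMonoid M]
    (e : G ≃* H × K) (f : H → M) (n : ℕ) :
    ∑ u with u ^ n = 1, f (e u).1 = #{y : K | y ^ n = 1} • ∑ x with x ^ n = 1, f x := by
  have hfilter : univ.filter (fun w : H × K => w ^ n = 1) =
      (univ.filter fun x : H => x ^ n = 1) ×ˢ (univ.filter fun y : K => y ^ n = 1) := by
    ext w
    simp [Prod.ext_iff]
  calc ∑ u with u ^ n = 1, f (e u).1
      = ∑ w ∈ univ.filter (fun w : H × K => w ^ n = 1), f w.1 :=
        sum_equiv e.toEquiv (by simp [← map_pow, e.map_eq_one_iff]) fun _ _ => rfl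
    _ = _ := by simp only [hfilter, sum_product_right, sum_const]

theorem card_rootsOfUnity_eq_gcd {F : Type*} [Field F] [Finite F] (n : ℕ) :
    Nat.card (rootsOfUnity n F) = n.gcd (Nat.card Fˣ) := by
  rw [rootsOfUnity_eq_ker, IsCyclic.card_powMonoidHom_ker, Nat.gcd_comm]

variable {F : Type*} [Field F] [Fintype F] [DecidableEq F]

theorem card_filter_units_pow_eq_one (n : ℕ) :
    #{x : Fˣ | x ^ n = 1} = n.gcd (Fintype.card Fˣ) := by
  rw [← Nat.card_eq_fintype_card, ← card_rootsOfUnity_eq_gcd, ← Fintype.card_subtype,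
    ← Nat.card_eq_fintype_card]
  exact Nat.card_congr (Equiv.subtypeEquivRight fun x => (mem_rootsOfUnity n x).symm)

theorem sum_filter_units_pow_eq_one (n : ℕ) :
    ∑ x : Fˣ with x ^ n = 1, (x : F) = if n.gcd (Fintype.card Fˣ) = 1 then 1 else 0 := by
  classical
  rw [sum_subtype (p := (· ∈ rootsOfUnity n F)) _ (by simp [mem_rootsOfUnity]),
    FiniteField.sum_subgroup_units]
  simp only [← Nat.card_eq_fintype_card, ← card_rootsOfUnity_eq_gcd, Subgroup.card_eq_one]

end

def ZMod.unitsChineseRemainder {m n : ℕ} (h : m.Coprime n) :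
    (ZMod (m * n))ˣ ≃* (ZMod m)ˣ × (ZMod n)ˣ :=
  (Units.mapEquiv (ZMod.chineseRemainder h).toMulEquiv).trans MulEquiv.prodUnits

theorem ZMod.unitsChineseRemainder_fst {m n : ℕ} (h : m.Coprime n) (u : (ZMod (m * n))ˣ) :
    ((unitsChineseRemainder h u).1 : ZMod m) = castHom (dvd_mul_right m n) (ZMod m) u :=
  congrArg (· (u : ZMod (m * n))) <|
    RingHom.ext_zmod ((RingHom.fst _ _).comp (chineseRemainder h).toRingHom) _

open Finset in
open scoped Classical in
theorem sum_units_orderOf_mod_pq_general (p q δ : ℕ) (hp : p.Prime) (hq : q.Prime)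
    (hpq : p ≠ q) (hδpos : 0 < δ)
    (hδ : δ ∣ Nat.lcm (p - 1) (q - 1)) :
    haveI : NeZero (p * q) := ⟨mul_ne_zero hp.pos.ne' hq.pos.ne'⟩
    ZMod.castHom (dvd_mul_right p q) (ZMod p)
        (∑ a ∈ univ.filter (fun a : (ZMod (p * q))ˣ => orderOf a = δ), (a : ZMod (p * q))) =
      ((ArithmeticFunction.moebius (Nat.gcd δ (p - 1)) : ℤ) : ZMod p) *
        (if Nat.gcd (δ / Nat.gcd δ (p - 1)) (p - 1) = 1 then 1 else 0) *
        ((Nat.totient δ / Nat.totient (Nat.gcd δ (p - 1)) : ℕ) : ZMod p) := by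
  have : Fact p.Prime := ⟨hp⟩
  have : Fact q.Prime := ⟨hq⟩
  have hroots : ∀ n ≠ 0, ∑ u : (ZMod (p * q))ˣ with u ^ n = 1,
      ZMod.castHom (dvd_mul_right p q) (ZMod p) u = (coprimeGcd (p - 1) (q - 1) n : ZMod p) := by
    intro n hn
    simp only [← ZMod.unitsChineseRemainder_fst ((Nat.coprime_primes hp hq).2 hpq)]
    rw [sum_filter_pow_eq_one_fst _ (fun x : (ZMod p)ˣ => (x : ZMod p)),
      sum_filter_units_pow_eq_one, card_filter_units_pow_eq_one, ZMod.card_units, ZMod.card_units,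
      coprimeGcd_apply]
    split_ifs <;> simp_all
  have hresidue : (μ * coprimeGcd (p - 1) (q - 1)) δ = orderSumResidue (p - 1) δ :=
    moebius_mul_coprimeGcd_apply hδpos.ne' hδ
  rw [mul_apply] at hresidue
  rw [map_sum, sum_filter_orderOf_eq_sum_moebius_smul _ hδpos]
  calc _ = ((∑ x ∈ δ.divisorsAntidiagonal, μ x.1 * coprimeGcd (p - 1) (q - 1) x.2 : ℤ) :
        ZMod p) := by
        push_cast
        refine sum_congr rfl fun x hx => ?_
        rw [hroots _ (Nat.pos_of_mem_divisors (Nat.snd_mem_divisors_of_mem_antidiagonal hx)).ne',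
          zsmul_eq_mul]
    _ = _ := by
        rw [hresidue, orderSumResidue]
        simp only [Int.cast_mul, Int.cast_natCast, Int.cast_ite, Int.cast_one, Int.cast_zero]

open Finset in
open scoped Classical in
/-- For distinct odd primes `p, q` and `δ` a positive divisor of `λ(pq) = lcm(p-1, q-1)`,
with `g = gcd(δ, p-1)`, the sum of all units of `ℤ/pqℤ` of multiplicative order `δ` is
congruent mod `p` to `μ(g) · I(gcd(δ/g, p-1)) · φ(δ)/φ(g)`, where `I(1) = 1` and `I(n) = 0`
for `n > 1`. -/
theorem sum_units_orderOf_mod_pq (p q δ : ℕ) (hp : p.Prime) (hq : q.Prime)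
    (hpodd : p ≠ 2) (hqodd : q ≠ 2) (hpq : p ≠ q) (hδpos : 0 < δ)
    (hδ : δ ∣ Nat.lcm (p - 1) (q - 1)) :
    haveI : NeZero (p * q) := ⟨mul_ne_zero hp.pos.ne' hq.pos.ne'⟩
    ZMod.castHom (dvd_mul_right p q) (ZMod p)
        (∑ a ∈ univ.filter (fun a : (ZMod (p * q))ˣ => orderOf a = δ), (a : ZMod (p * q))) =
      ((ArithmeticFunction.moebius (Nat.gcd δ (p - 1)) : ℤ) : ZMod p) *
        (if Nat.gcd (δ / Nat.gcd δ (p - 1)) (p - 1) = 1 then 1 else 0) *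
        ((Nat.totient δ / Nat.totient (Nat.gcd δ (p - 1)) : ℕ) : ZMod p) :=
  sum_units_orderOf_mod_pq_general p q δ hp hq hpq hδpos hδ
end

section
/- Define M : ℕ⁺ → ℚ to be the multiplicative function with M(1) = 1 and M(p^α) = 1/(α+1) - 1/α for every prime p and positive integer α. Then for every positive integer n, the sum of M(a) over all ordered pairs (a, b) of positive integers with lcm(a, b) = n equals 1 if n = 1 and equals 0 if n > 1. -/
/-!
Summing `lcmConv f g` over the divisors of `n` gives `(∑_{a ∣ n} f a) * (∑_{b ∣ n} g b)`, because
the lcm of two divisors of `n` is again a divisor of `n`. For `M` the sum `∑_{j ≤ k} M (p ^ j)`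
telescopes to `1 / (k + 1)`, so by multiplicativity `∑_{a ∣ n} M a = 1 / τ(n)`. Hence every divisor
sum of `M ∘ u` equals `1`, and Möbius inversion gives `M ∘ u = I`.
-/

open Finset ArithmeticFunction
open scoped ArithmeticFunction.Moebius ArithmeticFunction.zeta ArithmeticFunction.sigma

def lcmConv {R : Type*} [Mul R] [AddCommMonoid R] (f g : ℕ → R) (n : ℕ) : R :=
  ∑ x ∈ (n.divisors ×ˢ n.divisors).filter (fun x => x.1.lcm x.2 = n), f x.1 * g x.2

theorem filter_lcm_divisors_product_of_dvd {d n : ℕ} (hdn : d ∣ n) (hn : n ≠ 0) :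
    (d.divisors ×ˢ d.divisors).filter (fun x => x.1.lcm x.2 = d) =
      (n.divisors ×ˢ n.divisors).filter (fun x => x.1.lcm x.2 = d) := by
  ext ⟨a, b⟩
  simp only [mem_filter, mem_product, Nat.mem_divisors]
  constructor
  · rintro ⟨⟨⟨ha, -⟩, hb, -⟩, rfl⟩
    exact ⟨⟨⟨ha.trans hdn, hn⟩, hb.trans hdn, hn⟩, rfl⟩
  · rintro ⟨-, rfl⟩
    have hd : a.lcm b ≠ 0 := ne_zero_of_dvd_ne_zero hn hdn
    exact ⟨⟨⟨Nat.dvd_lcm_left a b, hd⟩, Nat.dvd_lcm_right a b, hd⟩, rfl⟩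

theorem sum_divisors_lcmConv {R : Type*} [NonUnitalNonAssocSemiring R] (f g : ℕ → R) {n : ℕ}
    (hn : n ≠ 0) :
    ∑ d ∈ n.divisors, lcmConv f g d = (∑ a ∈ n.divisors, f a) * ∑ b ∈ n.divisors, g b := by
  have hmaps : ∀ x ∈ n.divisors ×ˢ n.divisors, x.1.lcm x.2 ∈ n.divisors := by
    simp only [mem_product, Nat.mem_divisors]
    exact fun x hx => ⟨Nat.lcm_dvd hx.1.1 hx.2.1, hn⟩
  calc ∑ d ∈ n.divisors, lcmConv f g d
      = ∑ d ∈ n.divisors, ∑ x ∈ (n.divisors ×ˢ n.divisors).filter (fun x => x.1.lcm x.2 = d),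
          f x.1 * g x.2 :=
        sum_congr rfl fun d hd => by
          rw [lcmConv, filter_lcm_divisors_product_of_dvd (Nat.dvd_of_mem_divisors hd) hn]
    _ = ∑ x ∈ n.divisors ×ˢ n.divisors, f x.1 * g x.2 := sum_fiberwise_of_maps_to hmaps _
    _ = _ := by rw [sum_product, sum_mul_sum]

theorem eq_ite_of_sum_divisors_eq_one {R : Type*} [Ring R] {g : ℕ → R}
    (hg : ∀ n > 0, ∑ d ∈ n.divisors, g d = 1) {n : ℕ} (hn : 0 < n) :
    g n = if n = 1 then 1 else 0 := by
  rw [← sum_eq_iff_sum_mul_moebius_eq.mp hg n hn, ← one_apply (R := R),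
    ← coe_moebius_mul_coe_zeta, coe_mul_zeta_apply,
    Nat.sum_divisorsAntidiagonal (fun a _ => (μ a : R) * 1)]
  simp only [mul_one, intCoe_apply]

namespace ArithmeticFunction

def ofFun {R : Type*} [Zero R] (f : ℕ → R) : ArithmeticFunction R :=
  ⟨fun n => if n = 0 then 0 else f n, if_pos rfl⟩

theorem ofFun_apply {R : Type*} [Zero R] (f : ℕ → R) {n : ℕ} (hn : n ≠ 0) : ofFun f n = f n :=
  if_neg hn

theorem isMultiplicative_ofFun {R : Type*} [MonoidWithZero R] {f : ℕ → R} (h1 : f 1 = 1)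
    (hmul : ∀ a b : ℕ, a.Coprime b → f (a * b) = f a * f b) : (ofFun f).IsMultiplicative :=
  IsMultiplicative.iff_ne_zero.mpr ⟨by rw [ofFun_apply f one_ne_zero, h1],
    fun hm hn hmn => by
      rw [ofFun_apply f (mul_ne_zero hm hn), ofFun_apply f hm, ofFun_apply f hn, hmul _ _ hmn]⟩

theorem sum_divisors_mul_card_divisors_eq_one {R : Type*} [CommSemiring R]
    {f : ArithmeticFunction R} (hf : f.IsMultiplicative)
    (hpow : ∀ p k : ℕ, p.Prime → (∑ j ∈ range (k + 1), f (p ^ j)) * (k + 1) = 1)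
    {n : ℕ} (hn : n ≠ 0) :
    (∑ d ∈ n.divisors, f d) * #n.divisors = 1 := by
  have h : (f * ζ).pmul (σ 0 : ArithmeticFunction R) = (ζ : ArithmeticFunction R) := by
    rw [IsMultiplicative.eq_iff_eq_on_prime_powers _
      ((hf.mul isMultiplicative_zeta.natCast).pmul isMultiplicative_sigma.natCast) _
      isMultiplicative_zeta.natCast]
    intro p k hp
    rw [pmul_apply, coe_mul_zeta_apply, natCoe_apply, natCoe_apply, sigma_zero_apply_prime_pow hp,
      zeta_apply_ne (pow_ne_zero _ hp.ne_zero), Nat.sum_divisors_prime_pow hp]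
    push_cast
    exact hpow p k hp
  have h_at_n := congrArg (· n) h
  rwa [pmul_apply, coe_mul_zeta_apply, natCoe_apply, natCoe_apply, sigma_zero_apply,
    zeta_apply_ne hn, Nat.cast_one] at h_at_n

end ArithmeticFunction

theorem sum_range_succ_pow_eq_one_div {K : Type*} [Field K] [CharZero K] {M : ℕ → K} {p : ℕ}
    (hM1 : M 1 = 1) (hMpow : ∀ α : ℕ, 0 < α → M (p ^ α) = 1 / ((α : K) + 1) - 1 / (α : K))
    (k : ℕ) : ∑ j ∈ range (k + 1), M (p ^ j) = 1 / ((k : K) + 1) := by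
  induction k with
  | zero => simp [hM1]
  | succ k ih =>
    rw [sum_range_succ, ih, hMpow (k + 1) k.succ_pos]
    push_cast
    ring

/-- Lehmer: if `M` is the multiplicative function with `M(1) = 1` and
`M(p^α) = 1/(α+1) - 1/α` for every prime `p` and `α ≥ 1`, then the lcm convolution of `M`
with the constant function `1` is `I`, i.e. `Σ_{lcm(a,b)=n} M(a)` is `1` for `n = 1` and `0`
for `n > 1`. -/
theorem lcm_convolution_M_u (M : ℕ → ℚ) (hM1 : M 1 = 1)
    (hmul : ∀ a b : ℕ, Nat.Coprime a b → M (a * b) = M a * M b)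
    (hMpp : ∀ p α : ℕ, p.Prime → 0 < α →
      M (p ^ α) = 1 / ((α : ℚ) + 1) - 1 / (α : ℚ)) :
    ∀ n : ℕ, 0 < n →
      ∑ x ∈ (n.divisors ×ˢ n.divisors).filter (fun x => Nat.lcm x.1 x.2 = n), M x.1 =
        if n = 1 then 1 else 0 := by
  have hpow : ∀ p k : ℕ, p.Prime → (∑ j ∈ range (k + 1), ofFun M (p ^ j)) * (k + 1) = 1 := by
    intro p k hp
    rw [sum_congr rfl fun j _ => ofFun_apply M (pow_ne_zero j hp.ne_zero),
      sum_range_succ_pow_eq_one_div hM1 (hMpp p · hp)]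
    field_simp
  have hsum : ∀ n > 0, ∑ d ∈ n.divisors, lcmConv M 1 d = 1 := by
    intro n hn
    rw [sum_divisors_lcmConv M 1 hn.ne', ← sum_divisors_mul_card_divisors_eq_one
      (isMultiplicative_ofFun hM1 hmul) hpow hn.ne']
    simp [sum_congr rfl fun d hd => ofFun_apply M (Nat.ne_of_gt (Nat.pos_of_mem_divisors hd))]
  intro n hn
  simpa [lcmConv] using eq_ite_of_sum_divisors_eq_one hsum hn
end

section
/- For any arithmetic functions f, g : ℕ⁺ → ℂ and every positive integer n, (Σ_{d ∣ n} f(d)) · (Σ_{d ∣ n} g(d)) = Σ_{d ∣ n} ( Σ_{lcm(a,b)=d} f(a) g(b) ); that is, (f * u)(g * u) = (f ∘ g) * u, where * is Dirichlet convolution, ∘ is lcm convolution, and u is the constant function 1. -/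
open Finset in
/-- Lehmer: `(f * u)(g * u) = (f ∘ g) * u`, where `*` is Dirichlet convolution and `∘` is
lcm convolution: for every `n ≥ 1`,
`(Σ_{d ∣ n} f(d)) · (Σ_{d ∣ n} g(d)) = Σ_{d ∣ n} Σ_{lcm(a,b)=d} f(a) g(b)`. -/
theorem divisor_sum_mul_divisor_sum (f g : ℕ → ℂ) (n : ℕ) (hn : 0 < n) :
    (∑ d ∈ n.divisors, f d) * (∑ d ∈ n.divisors, g d) =
      ∑ d ∈ n.divisors,
        ∑ x ∈ (d.divisors ×ˢ d.divisors).filter (fun x => Nat.lcm x.1 x.2 = d),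
          f x.1 * g x.2 := by
  have hn' : n ≠ 0 := hn.ne'
  rw [Finset.sum_mul_sum]
  rw [← Finset.sum_product']
  rw [← Finset.sum_fiberwise_of_maps_to (t := n.divisors) (g := fun x : ℕ × ℕ => Nat.lcm x.1 x.2) (f := fun x : ℕ × ℕ => f x.1 * g x.2)
    (fun x hx => by
      simp only [Finset.mem_product, Nat.mem_divisors] at hx ⊢
      exact ⟨Nat.lcm_dvd hx.1.1 hx.2.1, hn'⟩)]
  refine Finset.sum_congr rfl fun d hd => Finset.sum_congr ?_ fun _ _ => rfl
  have hd' := Nat.mem_divisors.mp hd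
  ext x
  simp only [Finset.mem_filter, Finset.mem_product, Nat.mem_divisors]
  constructor
  · rintro ⟨⟨⟨h1, _⟩, ⟨h2, _⟩⟩, hl⟩
    refine ⟨⟨⟨hl ▸ Nat.dvd_lcm_left _ _, ?_⟩, hl ▸ Nat.dvd_lcm_right _ _, ?_⟩, hl⟩ <;>
      exact fun h0 => hn' (Nat.eq_zero_of_zero_dvd (h0 ▸ hd'.1))
  · rintro ⟨⟨⟨h1, _⟩, ⟨h2, _⟩⟩, hl⟩
    exact ⟨⟨⟨h1.trans hd'.1, hn'⟩, h2.trans hd'.1, hn'⟩, hl⟩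
end

section
/- For any arithmetic function f : ℕ⁺ → ℂ and every positive integer n, Σ_{lcm(a,b)=n} f(a) μ(b) = f(1) · μ(n), where μ is the Möbius function; that is, f ∘ μ = f(1) · μ for the lcm convolution ∘. -/
open Finset ArithmeticFunction in
private noncomputable def T (f : ℕ → ℂ) (d : ℕ) : ℂ :=
  ∑ x ∈ (d.divisors ×ˢ d.divisors).filter (fun x => Nat.lcm x.1 x.2 = d),
      f x.1 * ((moebius x.2 : ℤ) : ℂ)

open Finset ArithmeticFunction in
private lemma moebius_sum (n : ℕ) :
    ∑ d ∈ n.divisors, ((moebius d : ℤ) : ℂ) = if n = 1 then 1 else 0 := by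
  have h : ∑ d ∈ n.divisors, (moebius d : ℤ) = if n = 1 then 1 else 0 := by
    have := coe_mul_zeta_apply (f := (moebius : ArithmeticFunction ℤ)) (x := n)
    rw [moebius_mul_coe_zeta, one_apply] at this
    simpa using this.symm
  calc ∑ d ∈ n.divisors, ((moebius d : ℤ) : ℂ)
      = ((∑ d ∈ n.divisors, (moebius d : ℤ) : ℤ) : ℂ) := by push_cast; ring
    _ = _ := by rw [h]; split <;> simp

open Finset ArithmeticFunction in
private lemma key (f : ℕ → ℂ) :
    ∀ n > 0, ∑ d ∈ n.divisors, T f d = f 1 * (if n = 1 then 1 else 0) := by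
  intro n hn
  have h1 : ∀ d ∈ n.divisors, T f d =
      ∑ x ∈ ((n.divisors ×ˢ n.divisors).filter (fun x => Nat.lcm x.1 x.2 = d)),
        f x.1 * ((moebius x.2 : ℤ) : ℂ) := by
    intro d hd
    obtain ⟨hdn, hn0⟩ := Nat.mem_divisors.mp hd
    apply Finset.sum_congr _ (fun _ _ => rfl)
    ext ⟨a, b⟩
    simp only [mem_filter, mem_product, Nat.mem_divisors]
    constructor
    · rintro ⟨⟨⟨ha, _⟩, ⟨hb, _⟩⟩, hl⟩
      exact ⟨⟨⟨ha.trans hdn, hn0⟩, hb.trans hdn, hn0⟩, hl⟩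
    · rintro ⟨⟨⟨ha, _⟩, ⟨hb, _⟩⟩, hl⟩
      have hd0 : d ≠ 0 := fun h => hn0 (by simpa [h] using hdn)
      exact ⟨⟨⟨hl ▸ Nat.dvd_lcm_left a b, hd0⟩, hl ▸ Nat.dvd_lcm_right a b, hd0⟩, hl⟩
  rw [Finset.sum_congr rfl h1,
    Finset.sum_fiberwise_of_maps_to (g := fun x : ℕ × ℕ => Nat.lcm x.1 x.2)
      (t := n.divisors) ?_]
  · rw [Finset.sum_product]
    simp_rw [← Finset.mul_sum, moebius_sum, ← Finset.sum_mul]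
    rcases eq_or_ne n 1 with h | h
    · subst h; simp
    · simp [h]
  · rintro ⟨a, b⟩ hx
    simp only [mem_product, Nat.mem_divisors] at hx
    exact Nat.mem_divisors.mpr ⟨Nat.lcm_dvd hx.1.1 hx.2.1, hn.ne'⟩

open Finset in
/-- For any arithmetic function `f` and every `n ≥ 1`,
`Σ_{lcm(a,b)=n} f(a) μ(b) = f(1) · μ(n)`, i.e. `f ∘ μ = f(1) · μ` for the lcm convolution. -/
theorem lcm_convolution_moebius (f : ℕ → ℂ) (n : ℕ) (hn : 0 < n) :
    ∑ x ∈ (n.divisors ×ˢ n.divisors).filter (fun x => Nat.lcm x.1 x.2 = n),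
        f x.1 * ((ArithmeticFunction.moebius x.2 : ℤ) : ℂ) =
      f 1 * ((ArithmeticFunction.moebius n : ℤ) : ℂ) := by
  have key' := (ArithmeticFunction.sum_eq_iff_sum_mul_moebius_eq
    (f := T f) (g := fun m => f 1 * (if m = 1 then 1 else 0))).mp (key f) n hn
  show T f n = _
  rw [← key', Finset.sum_eq_single (n, 1)]
  · simp [mul_comm]
  · rintro ⟨a, b⟩ hab hne
    rcases eq_or_ne b 1 with rfl | hb
    · have := Nat.mem_divisorsAntidiagonal.mp hab
      exact absurd (by simp [← this.1]) hne
    · simp [hb]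
  · intro h
    exact absurd (Nat.mem_divisorsAntidiagonal.mpr ⟨by simp, hn.ne'⟩) h
end

section
/- Let f, g : ℕ⁺ → ℂ be arithmetic functions. Then (for every positive integer n, Σ_{lcm(a,b)=n} f(a) g(b) equals 1 if n = 1 and 0 if n > 1) holds if and only if (for every positive integer n, (Σ_{d ∣ n} f(d)) · (Σ_{d ∣ n} g(d)) = 1); that is, f ∘ g = I if and only if the divisor sums of f and g multiply to 1 for every n. -/
open Finset

private noncomputable def S' (f g : ℕ → ℂ) (n : ℕ) : ℂ :=
  ∑ x ∈ (n.divisors ×ˢ n.divisors).filter (fun x => Nat.lcm x.1 x.2 = n),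
    f x.1 * g x.2

private lemma key_sum (f g : ℕ → ℂ) (n : ℕ) (hn : 0 < n) :
    ∑ d ∈ n.divisors, S' f g d
      = (∑ d ∈ n.divisors, f d) * (∑ d ∈ n.divisors, g d) := by
  rw [Finset.sum_mul_sum, ← Finset.sum_product']
  rw [← Finset.sum_fiberwise_of_maps_to
    (g := fun x : ℕ × ℕ => Nat.lcm x.1 x.2) (t := n.divisors)
    (fun x hx => by
      simp only [Finset.mem_product, Nat.mem_divisors] at hx
      exact Nat.mem_divisors.mpr ⟨Nat.lcm_dvd hx.1.1 hx.2.1, hn.ne'⟩)]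
  refine Finset.sum_congr rfl (fun d hd => ?_)
  simp only [Nat.mem_divisors] at hd
  unfold S'
  refine Finset.sum_congr ?_ (fun _ _ => rfl)
  ext ⟨a, b⟩
  simp only [Finset.mem_filter, Finset.mem_product, Nat.mem_divisors]
  constructor
  · rintro ⟨⟨⟨ha, _⟩, ⟨hb, _⟩⟩, h⟩
    exact ⟨⟨⟨ha.trans hd.1, hn.ne'⟩, ⟨hb.trans hd.1, hn.ne'⟩⟩, h⟩
  · rintro ⟨⟨⟨ha, _⟩, ⟨hb, _⟩⟩, h⟩
    have hdn : d ≠ 0 := fun h0 => hd.2 (by simpa [h0] using hd.1)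
    exact ⟨⟨⟨h ▸ Nat.dvd_lcm_left a b, hdn⟩, ⟨h ▸ Nat.dvd_lcm_right a b, hdn⟩⟩, h⟩

open Finset in
/-- `f ∘ g = I` (lcm convolution) if and only if
`(Σ_{d ∣ n} f(d)) · (Σ_{d ∣ n} g(d)) = 1` for every positive integer `n`. -/
theorem lcm_convolution_eq_I_iff (f g : ℕ → ℂ) :
    (∀ n : ℕ, 0 < n →
        ∑ x ∈ (n.divisors ×ˢ n.divisors).filter (fun x => Nat.lcm x.1 x.2 = n),
          f x.1 * g x.2 = if n = 1 then 1 else 0) ↔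
      (∀ n : ℕ, 0 < n →
        (∑ d ∈ n.divisors, f d) * (∑ d ∈ n.divisors, g d) = 1) := by
  constructor
  · intro h n hn
    rw [← key_sum f g n hn]
    have : ∀ d ∈ n.divisors, S' f g d = if d = 1 then 1 else 0 := fun d hd => by
      have := Nat.pos_of_mem_divisors hd
      exact h d this
    rw [Finset.sum_congr rfl this, Finset.sum_ite_eq' n.divisors 1 (fun _ => (1:ℂ))]
    simp [Nat.one_mem_divisors, hn.ne']
  · intro h n hn
    induction n using Nat.strong_induction_on with
    | _ n ih =>
      have hkey := key_sum f g n hn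
      rw [h n hn] at hkey
      rcases eq_or_ne n 1 with rfl | hne
      · simp only [Nat.divisors_one, Finset.sum_singleton] at hkey
        simpa [S'] using hkey
      · simp only [hne, if_false]
        have hmem : n ∈ n.divisors := Nat.mem_divisors_self n hn.ne'
        rw [← Finset.add_sum_erase _ _ hmem] at hkey
        have : ∀ d ∈ n.divisors.erase n, S' f g d = if d = 1 then 1 else 0 := by
          intro d hd
          have hdn : d ≠ n := Finset.ne_of_mem_erase hd
          have hd' := Finset.mem_of_mem_erase hd
          have hdpos := Nat.pos_of_mem_divisors hd'
          have hlt : d < n := lt_of_le_of_ne (Nat.le_of_dvd hn (Nat.mem_divisors.mp hd').1) hdn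
          exact ih d hlt hdpos
        rw [Finset.sum_congr rfl this, Finset.sum_ite_eq' (n.divisors.erase n) 1 (fun _ => (1:ℂ))] at hkey
        have hm1 : (1:ℕ) ∈ n.divisors.erase n :=
          Finset.mem_erase.mpr ⟨fun h1 => hne h1.symm, Nat.one_mem_divisors.mpr hn.ne'⟩
        rw [if_pos hm1] at hkey
        have h2 : (S' f g n) + 1 = 0 + 1 := by rw [zero_add]; exact hkey
        have := add_right_cancel h2
        simpa [S'] using this
end

section
/- Let f : ℕ⁺ → ℂ be a multiplicative function. Then for every positive integer n, Σ_{lcm(a,b)=n} μ(a) f(a) = ∏_{p : p² ∣ n} (1 - f(p)) · ∏_{p : p ∥ n} (1 - 2 f(p)), where the first product is over primes p whose square divides n and the second over primes p exactly dividing n (p ∣ n but p² ∤ n), and μ is the Möbius function. In particular, if n is a perfect square, then Σ_{d ∣ n} μ(d) f(d) = Σ_{lcm(a,b)=n} μ(a) f(a). -/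
/-!
Put `g = μ·f` and `S(n) = Σ_{lcm(a,b)=n} g(a)`. Summing `S` over the divisors of `n` runs once over
all pairs of divisors of `n`, so `ζ * S = (g * ζ)·σ₀` pointwise and `S = μ * ((g * ζ)·σ₀)` is
multiplicative. Since `(g * ζ)(p^k) = 1 - f(p)` and `σ₀(p^k) = k + 1` for `k ≥ 1`, Möbius inversion
gives `S(p^k) = (k + 1)(1 - f(p)) - k(1 - f(p)) = 1 - f(p)` for `k ≥ 2`, while
`S(p) = 2(1 - f(p)) - 1 = 1 - 2f(p)`. When `n` is a square every exponent is at least 2, and both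
sides equal `∏_{p ∣ n} (1 - f(p))`.
-/

open Finset ArithmeticFunction
open scoped ArithmeticFunction.Moebius ArithmeticFunction.sigma ArithmeticFunction.zeta

theorem Nat.filter_lcm_eq_of_dvd {d n : ℕ} (hd : d ∣ n) (hn : n ≠ 0) :
    (d.divisors ×ˢ d.divisors).filter (fun x => Nat.lcm x.1 x.2 = d) =
      (n.divisors ×ˢ n.divisors).filter (fun x => Nat.lcm x.1 x.2 = d) := by
  ext ⟨a, b⟩
  simp only [mem_filter, mem_product, Nat.mem_divisors]
  constructor
  · rintro ⟨⟨⟨ha, -⟩, hb, -⟩, rfl⟩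
    exact ⟨⟨⟨ha.trans hd, hn⟩, hb.trans hd, hn⟩, rfl⟩
  · rintro ⟨-, rfl⟩
    exact ⟨⟨⟨Nat.dvd_lcm_left a b, ne_zero_of_dvd_ne_zero hn hd⟩, Nat.dvd_lcm_right a b,
      ne_zero_of_dvd_ne_zero hn hd⟩, rfl⟩

theorem IsSquare.sq_dvd_of_prime_dvd {n p : ℕ} (hn : IsSquare n) (hp : p.Prime) (hpn : p ∣ n) :
    p ^ 2 ∣ n := by
  obtain ⟨r, rfl⟩ := hn
  have hpr : p ∣ r := (hp.dvd_mul.mp hpn).elim id id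
  exact (pow_two p).symm ▸ mul_dvd_mul hpr hpr

namespace ArithmeticFunction

variable {R : Type*}

def lcmSum [AddCommMonoid R] (g : ArithmeticFunction R) : ArithmeticFunction R :=
  ⟨fun n => ∑ x ∈ (n.divisors ×ˢ n.divisors).filter (fun x => Nat.lcm x.1 x.2 = n), g x.1,
    by simp⟩

theorem lcmSum_apply [AddCommMonoid R] (g : ArithmeticFunction R) (n : ℕ) :
    lcmSum g n = ∑ x ∈ (n.divisors ×ˢ n.divisors).filter (fun x => Nat.lcm x.1 x.2 = n), g x.1 :=
  rfl

theorem coe_zeta_mul_lcmSum [Semiring R] (g : ArithmeticFunction R) :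
    (ζ : ArithmeticFunction R) * lcmSum g = (g * ζ).pmul (σ 0 : ArithmeticFunction R) := by
  ext n
  rcases eq_or_ne n 0 with rfl | hn
  · simp
  have hlcm : ∀ x ∈ n.divisors ×ˢ n.divisors, Nat.lcm x.1 x.2 ∈ n.divisors := by
    simp only [mem_product, Nat.mem_divisors]
    exact fun x hx => ⟨Nat.lcm_dvd hx.1.1 hx.2.1, hn⟩
  calc ((ζ : ArithmeticFunction R) * lcmSum g) n
      = ∑ d ∈ n.divisors, ∑ x ∈ (n.divisors ×ˢ n.divisors).filter (fun x => Nat.lcm x.1 x.2 = d),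
          g x.1 := by
        rw [coe_zeta_mul_apply]
        refine sum_congr rfl fun d hd => ?_
        rw [lcmSum_apply, Nat.filter_lcm_eq_of_dvd (Nat.dvd_of_mem_divisors hd) hn]
    _ = ∑ a ∈ n.divisors, ∑ _b ∈ n.divisors, g a := by
        rw [sum_fiberwise_of_maps_to hlcm, sum_product]
    _ = ((g * ζ).pmul (σ 0 : ArithmeticFunction R)) n := by
        simp only [sum_const, pmul_apply, coe_mul_zeta_apply, natCoe_apply, sigma_zero_apply,
          nsmul_eq_mul, sum_mul]
        exact sum_congr rfl fun a _ => (Nat.cast_commute _ _).eq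

theorem lcmSum_eq_moebius_mul [Ring R] (g : ArithmeticFunction R) :
    lcmSum g = (μ : ArithmeticFunction R) * (g * ζ).pmul (σ 0 : ArithmeticFunction R) := by
  rw [← coe_zeta_mul_lcmSum, ← mul_assoc, coe_moebius_mul_coe_zeta, one_mul]

theorem IsMultiplicative.lcmSum [CommRing R] {g : ArithmeticFunction R}
    (hg : g.IsMultiplicative) : (lcmSum g).IsMultiplicative := by
  rw [lcmSum_eq_moebius_mul]
  exact isMultiplicative_moebius.intCast.mul
    ((hg.mul isMultiplicative_zeta.natCast).pmul isMultiplicative_sigma.natCast)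

theorem sum_range_moebius_prime_pow_mul [Ring R] {p k : ℕ} (hp : p.Prime) (hk : k ≠ 0)
    (c : ℕ → R) : ∑ i ∈ range (k + 1), (μ (p ^ i) : R) * c i = c 0 - c 1 := by
  rw [sum_eq_add 0 1 zero_ne_one]
  · simp [moebius_apply_prime hp, sub_eq_add_neg]
  · intro i _ hi
    rw [moebius_apply_prime_pow hp hi.1, if_neg hi.2, Int.cast_zero, zero_mul]
  · simp
  · simp only [mem_range]
    omega

theorem coe_moebius_mul_apply_prime_pow [Ring R] (H : ArithmeticFunction R) {p k : ℕ}
    (hp : p.Prime) (hk : k ≠ 0) :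
    ((μ : ArithmeticFunction R) * H) (p ^ k) = H (p ^ k) - H (p ^ (k - 1)) := by
  rw [mul_apply, Nat.sum_divisorsAntidiagonal (fun a b => (μ : ArithmeticFunction R) a * H b),
    Nat.sum_divisors_prime_pow hp]
  simp only [intCoe_apply]
  rw [sum_range_moebius_prime_pow_mul hp hk, pow_zero, Nat.div_one,
    Nat.pow_div (Nat.one_le_iff_ne_zero.mpr hk) hp.pos]

theorem IsMultiplicative.apply_eq_prod_primeFactors [CommMonoidWithZero R]
    {f : ArithmeticFunction R} (hf : f.IsMultiplicative) {n : ℕ} (hn : n ≠ 0) :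
    f n = ∏ p ∈ n.primeFactors, f (p ^ n.factorization p) := by
  rw [hf.multiplicative_factorization f hn, Finsupp.prod, Nat.support_factorization]

def moebiusPmul [Ring R] (f : ℕ → R) : ArithmeticFunction R :=
  ⟨fun n => μ n * f n, by simp⟩

theorem moebiusPmul_apply [Ring R] (f : ℕ → R) (n : ℕ) : moebiusPmul f n = μ n * f n :=
  rfl

theorem isMultiplicative_moebiusPmul [CommRing R] {f : ℕ → R} (hf1 : f 1 = 1)
    (hmul : ∀ a b : ℕ, a.Coprime b → f (a * b) = f a * f b) :
    (moebiusPmul f).IsMultiplicative := by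
  refine ⟨by simp [moebiusPmul_apply, hf1], fun {a b} hab => ?_⟩
  simp only [moebiusPmul_apply, isMultiplicative_moebius.map_mul_of_coprime hab, hmul a b hab,
    Int.cast_mul]
  ring

theorem moebiusPmul_mul_zeta_apply_prime_pow [Ring R] {f : ℕ → R} (hf1 : f 1 = 1) {p k : ℕ}
    (hp : p.Prime) (hk : k ≠ 0) : (moebiusPmul f * ζ) (p ^ k) = 1 - f p := by
  rw [coe_mul_zeta_apply, Nat.sum_divisors_prime_pow hp]
  simpa [moebiusPmul_apply, hf1] using sum_range_moebius_prime_pow_mul hp hk (fun i => f (p ^ i))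

theorem moebiusPmul_mul_zeta_apply [CommRing R] {f : ℕ → R} (hf1 : f 1 = 1)
    (hmul : ∀ a b : ℕ, a.Coprime b → f (a * b) = f a * f b) {n : ℕ} (hn : n ≠ 0) :
    (moebiusPmul f * ζ) n = ∏ p ∈ n.primeFactors, (1 - f p) := by
  have hmult := (isMultiplicative_moebiusPmul hf1 hmul).mul isMultiplicative_zeta.natCast
  rw [hmult.apply_eq_prod_primeFactors hn]
  refine prod_congr rfl fun p hp => ?_
  have hp' := Nat.prime_of_mem_primeFactors hp
  exact moebiusPmul_mul_zeta_apply_prime_pow hf1 hp'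
    (hp'.factorization_pos_of_dvd hn (Nat.dvd_of_mem_primeFactors hp)).ne'

theorem lcmSum_moebiusPmul_apply_prime_pow [CommRing R] {f : ℕ → R} (hf1 : f 1 = 1) {p k : ℕ}
    (hp : p.Prime) (hk : k ≠ 0) :
    lcmSum (moebiusPmul f) (p ^ k) = if 2 ≤ k then 1 - f p else 1 - 2 * f p := by
  rw [lcmSum_eq_moebius_mul, coe_moebius_mul_apply_prime_pow _ hp hk, pmul_apply, pmul_apply,
    natCoe_apply, natCoe_apply, sigma_zero_apply_prime_pow hp, sigma_zero_apply_prime_pow hp,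
    moebiusPmul_mul_zeta_apply_prime_pow hf1 hp hk]
  obtain rfl | hk1 := eq_or_ne k 1
  · rw [if_neg (by norm_num), Nat.sub_self, pow_zero, mul_apply_one, moebiusPmul_apply,
      moebius_apply_one, hf1]
    simp only [natCoe_apply, zeta_apply_ne one_ne_zero]
    push_cast
    ring
  · rw [moebiusPmul_mul_zeta_apply_prime_pow hf1 hp (by omega), if_pos (by omega),
      Nat.sub_add_cancel (Nat.one_le_iff_ne_zero.mpr hk)]
    push_cast
    ring

theorem lcmSum_moebiusPmul_apply [CommRing R] {f : ℕ → R} (hf1 : f 1 = 1)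
    (hmul : ∀ a b : ℕ, a.Coprime b → f (a * b) = f a * f b) {n : ℕ} (hn : n ≠ 0) :
    lcmSum (moebiusPmul f) n = (∏ p ∈ n.primeFactors.filter (fun p => p ^ 2 ∣ n), (1 - f p)) *
      ∏ p ∈ n.primeFactors.filter (fun p => ¬ p ^ 2 ∣ n), (1 - 2 * f p) := by
  rw [(isMultiplicative_moebiusPmul hf1 hmul).lcmSum.apply_eq_prod_primeFactors hn, ← prod_ite]
  refine prod_congr rfl fun p hp => ?_
  have hp' := Nat.prime_of_mem_primeFactors hp
  rw [lcmSum_moebiusPmul_apply_prime_pow hf1 hp'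
    (hp'.factorization_pos_of_dvd hn (Nat.dvd_of_mem_primeFactors hp)).ne']
  simp only [hp'.pow_dvd_iff_le_factorization hn]

end ArithmeticFunction

open Finset in
/-- For a multiplicative function `f` and every `n ≥ 1`,
`Σ_{lcm(a,b)=n} μ(a) f(a) = ∏_{p² ∣ n} (1 - f(p)) · ∏_{p ∥ n} (1 - 2 f(p))`,
the products being over prime divisors of `n`.  In particular, if `n` is a perfect square,
then `Σ_{d ∣ n} μ(d) f(d)` equals the lcm-convolution sum. -/
theorem lcm_convolution_moebius_mul_multiplicative (f : ℕ → ℂ) (hf0 : ∃ k, f k ≠ 0)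
    (hmul : ∀ a b : ℕ, Nat.Coprime a b → f (a * b) = f a * f b) (n : ℕ) (hn : 0 < n) :
    (∑ x ∈ (n.divisors ×ˢ n.divisors).filter (fun x => Nat.lcm x.1 x.2 = n),
        ((ArithmeticFunction.moebius x.1 : ℤ) : ℂ) * f x.1 =
      (∏ p ∈ n.primeFactors.filter (fun p => p ^ 2 ∣ n), (1 - f p)) *
        ∏ p ∈ n.primeFactors.filter (fun p => ¬ p ^ 2 ∣ n), (1 - 2 * f p)) ∧
    (IsSquare n →
      ∑ d ∈ n.divisors, ((ArithmeticFunction.moebius d : ℤ) : ℂ) * f d =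
        ∑ x ∈ (n.divisors ×ˢ n.divisors).filter (fun x => Nat.lcm x.1 x.2 = n),
          ((ArithmeticFunction.moebius x.1 : ℤ) : ℂ) * f x.1) := by
  obtain ⟨k, hk⟩ := hf0
  have hf1 : f 1 = 1 :=
    mul_left_cancel₀ hk (by rw [mul_one, ← hmul k 1 (Nat.coprime_one_right k), mul_one])
  have hlcm := lcmSum_moebiusPmul_apply hf1 hmul hn.ne'
  refine ⟨hlcm, fun hsq => ?_⟩
  have hsq_dvd : ∀ p ∈ n.primeFactors, p ^ 2 ∣ n := fun p hp =>
    hsq.sq_dvd_of_prime_dvd (Nat.prime_of_mem_primeFactors hp) (Nat.dvd_of_mem_primeFactors hp)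
  calc ∑ d ∈ n.divisors, ((moebius d : ℤ) : ℂ) * f d
      = (moebiusPmul f * ζ) n := (coe_mul_zeta_apply (f := moebiusPmul f)).symm
    _ = ∏ p ∈ n.primeFactors, (1 - f p) :=
        moebiusPmul_mul_zeta_apply hf1 hmul hn.ne'
    _ = lcmSum (moebiusPmul f) n := by
        rw [hlcm, filter_true_of_mem hsq_dvd,
          filter_false_of_mem fun p hp h => h (hsq_dvd p hp), prod_empty, mul_one]
end
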